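/- arXiv:1812.05482 — 8 statements merged into one kernel-verified Lean document; each statement's English description precedes it below -/
import Mathlib

section
/- A separable metric space (X, ρ) can be isometrically embedded into the real Hilbert space ℓ² (i.e., there exists a map φ : X → ℓ² with ‖φ(x) − φ(y)‖ = ρ(x,y) for all x, y ∈ X) if and only if, for every n ≥ 2 and every (n+1)-tuple of points x₀, x₁, …, xₙ in X, the n × n real matrix whose (j,k) entry is ρ(x₀,x_j)² + ρ(x₀,x_k)² − ρ(x_j,x_k)² is positive semidefinite. -/
/-!
Fix a base point `b`. The matrix of the theorem is twice the matrix of the kernel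
`k(x, y) = (ρ(b,x)² + ρ(b,y)² − ρ(x,y)²) / 2`, which is the Gram kernel `⟪φ x − φ b, φ y − φ b⟫`
of any isometric embedding; this gives necessity. Conversely, a positive semidefinite kernel on
a countable set is realised as a Gram matrix in `ℓ²` one vector at a time: the next vector is
found in the span of the previous ones by the Riesz representation theorem, and its norm is then
corrected along a direction orthogonal to all of them, which exists because `ℓ²` is
infinite-dimensional. Realising `k` on a countable dense subset gives an isometry on that subset,
which extends to the whole space by completeness of `ℓ²`.
-/

open scoped RealInnerProductSpace
open Matrix

theorem Matrix.posSemidef_of_forall_finset {ι R : Type*} [Ring R] [PartialOrder R] [StarRing R]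
    {M : Matrix ι ι R} (h : ∀ s : Finset ι, (M.submatrix ((↑) : s → ι) (↑)).PosSemidef) :
    M.PosSemidef := by
  classical
  refine ⟨Matrix.ext fun i j => ?_, fun x => ?_⟩
  · simpa using congrFun₂ (h {i, j}).1 ⟨i, by simp⟩ ⟨j, by simp⟩
  · rw [← Finsupp.mapDomain_comapDomain ((↑) : x.support → ι) Subtype.val_injective x
      (by simp [Set.subset_def])]
    simpa [Finsupp.sum_mapDomain_index, add_mul, mul_add] using (h x.support).2 _

theorem Matrix.IsSymm.dotProduct_mulVec_snoc {n : ℕ} {A : Matrix (Fin (n + 1)) (Fin (n + 1)) ℝ}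
    (hA : A.IsSymm) (c : Fin n → ℝ) (s : ℝ) :
    Fin.snoc c s ⬝ᵥ A *ᵥ Fin.snoc c s = c ⬝ᵥ A.submatrix Fin.castSucc Fin.castSucc *ᵥ c
      + 2 * s * ∑ j, c j * A j.castSucc (Fin.last n) + s ^ 2 * A (Fin.last n) (Fin.last n) := by
  have hrow : ∑ j, A (Fin.last n) j.castSucc * c j = ∑ j, c j * A j.castSucc (Fin.last n) :=
    Finset.sum_congr rfl fun j _ => by rw [hA.apply, mul_comm]
  have hcol : ∑ j, c j * (A j.castSucc (Fin.last n) * s) =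
      s * ∑ j, c j * A j.castSucc (Fin.last n) := by
    rw [Finset.mul_sum]
    exact Finset.sum_congr rfl fun j _ => by ring
  simp only [dotProduct, mulVec, Fin.sum_univ_castSucc, Fin.snoc_castSucc, Fin.snoc_last,
    submatrix_apply, mul_add, Finset.sum_add_distrib, hcol]
  rw [hrow]
  ring

theorem exists_seq_forall_snoc {α : Type*} (P : ∀ n, (Fin n → α) → Prop) (h0 : P 0 Fin.elim0)
    (h : ∀ n (w : Fin n → α), P n w → ∃ a, P (n + 1) (Fin.snoc w a)) :
    ∃ f : ℕ → α, ∀ n, P n (fun j => f j) := by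
  let F : ∀ n, {w : Fin n → α // P n w} := fun n =>
    Nat.rec ⟨Fin.elim0, h0⟩ (fun n w => ⟨Fin.snoc w.1 (h n w.1 w.2).choose,
      (h n w.1 w.2).choose_spec⟩) n
  refine ⟨fun m => (F (m + 1)).1 (Fin.last m), fun n => ?_⟩
  convert (F n).2 using 1
  induction n with
  | zero => exact funext fun j => j.elim0
  | succ n ih =>
    funext j
    induction j using Fin.lastCases with
    | last => rfl
    | cast j => simpa [F] using congrFun ih j

section GramRealization

variable {E : Type*} [NormedAddCommGroup E] [InnerProductSpace ℝ E]

theorem eq_zero_of_forall_nonneg_mul_add_sq {a b : ℝ} (h : ∀ s : ℝ, 0 ≤ 2 * s * a + s ^ 2 * b) :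
    a = 0 := by
  have := discrim_le_zero (a := b) (b := 2 * a) (c := 0) fun s => by linarith [h s]
  rw [discrim] at this
  nlinarith [sq_nonneg a]

theorem exists_mem_span_inner_eq {ι : Type*} [Fintype ι] (w : ι → E) (g : ι → ℝ) (t : ℝ)
    (h : ∀ (c : ι → ℝ) (s : ℝ), 0 ≤ ‖∑ j, c j • w j‖ ^ 2 + 2 * s * ∑ j, c j * g j + s ^ 2 * t) :
    ∃ u ∈ Submodule.span ℝ (Set.range w), (∀ j, ⟪w j, u⟫ = g j) ∧ ‖u‖ ^ 2 ≤ t := by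
  classical
  let L := Fintype.linearCombination ℝ w
  let φ := Fintype.linearCombination ℝ g
  have hL (c : ι → ℝ) : L c = ∑ j, c j • w j := Fintype.linearCombination_apply ℝ w c
  have hφ (c : ι → ℝ) : φ c = ∑ j, c j * g j := Fintype.linearCombination_apply ℝ g c
  have hker : LinearMap.ker L ≤ LinearMap.ker φ := fun c hc => by
    rw [LinearMap.mem_ker, hL] at hc
    rw [LinearMap.mem_ker, hφ]
    exact eq_zero_of_forall_nonneg_mul_add_sq fun s => by simpa [hc] using h c s
  let ψ : LinearMap.range L →ₗ[ℝ] ℝ := (LinearMap.ker L).liftQ φ hker ∘ₗ L.quotKerEquivRange.symm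
  have hψ (c : ι → ℝ) : ψ ⟨L c, L.mem_range_self c⟩ = φ c := by
    simp [ψ, LinearMap.quotKerEquivRange_symm_apply_image]
  let u : LinearMap.range L :=
    (InnerProductSpace.toDual ℝ (LinearMap.range L)).symm (LinearMap.toContinuousLinearMap ψ)
  have hu (c : ι → ℝ) : ⟪(u : E), L c⟫ = φ c := by
    rw [← hψ]
    exact InnerProductSpace.toDual_symm_apply (E := LinearMap.range L) (x := ⟨L c, _⟩)
  obtain ⟨a, ha⟩ := u.2
  refine ⟨u, Fintype.range_linearCombination ℝ w ▸ u.2, fun j => ?_, ?_⟩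
  · simpa [real_inner_comm, hL, hφ, Pi.single_apply] using hu (Pi.single j 1)
  · have hnorm : ‖(u : E)‖ ^ 2 = ∑ j, a j * g j := by
      rw [← real_inner_self_eq_norm_sq, ← hφ, ← hu, ha]
    have := h a (-1)
    rw [← hL, ha, hnorm] at this
    linarith

theorem Submodule.exists_norm_eq_one_mem_orthogonal (hE : ¬ FiniteDimensional ℝ E)
    (W : Submodule ℝ E) [FiniteDimensional ℝ W] : ∃ e ∈ Wᗮ, ‖e‖ = 1 := by
  have hW : Wᗮ ≠ ⊥ := by
    rw [Ne, Submodule.orthogonal_eq_bot_iff]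
    rintro rfl
    exact hE (Module.Finite.equiv Submodule.topEquiv)
  obtain ⟨e, he, he0⟩ := Submodule.exists_mem_ne_zero_of_ne_bot hW
  exact ⟨‖e‖⁻¹ • e, Wᗮ.smul_mem _ he, norm_smul_inv_norm he0⟩

theorem exists_inner_eq_and_norm_sq_eq (hE : ¬ FiniteDimensional ℝ E) {ι : Type*} [Fintype ι]
    (w : ι → E) (g : ι → ℝ) (t : ℝ)
    (h : ∀ (c : ι → ℝ) (s : ℝ), 0 ≤ ‖∑ j, c j • w j‖ ^ 2 + 2 * s * ∑ j, c j * g j + s ^ 2 * t) :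
    ∃ v, (∀ j, ⟪w j, v⟫ = g j) ∧ ‖v‖ ^ 2 = t := by
  obtain ⟨u, hu, hwu, hut⟩ := exists_mem_span_inner_eq w g t h
  have := FiniteDimensional.span_of_finite ℝ (Set.finite_range w)
  obtain ⟨e, he, he1⟩ := (Submodule.span ℝ (Set.range w)).exists_norm_eq_one_mem_orthogonal hE
  have hue : ⟪u, e⟫ = 0 := Submodule.inner_right_of_mem_orthogonal hu he
  refine ⟨u + √(t - ‖u‖ ^ 2) • e, fun j => ?_, ?_⟩
  · rw [inner_add_right, real_inner_smul_right, hwu,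
      Submodule.inner_right_of_mem_orthogonal (Submodule.subset_span (Set.mem_range_self j)) he,
      mul_zero, add_zero]
  · rw [norm_add_sq_real, real_inner_smul_right, hue, norm_smul, he1, mul_one,
      Real.norm_of_nonneg (Real.sqrt_nonneg _), Real.sq_sqrt (by linarith)]
    ring

theorem exists_gram_snoc_eq (hE : ¬ FiniteDimensional ℝ E) {n : ℕ} (w : Fin n → E)
    {A : Matrix (Fin (n + 1)) (Fin (n + 1)) ℝ} (hA : A.PosSemidef)
    (hw : gram ℝ w = A.submatrix Fin.castSucc Fin.castSucc) :
    ∃ v, gram ℝ (Fin.snoc w v) = A := by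
  have hsymm : A.IsSymm := hA.1
  have hw' (j k) : ⟪w j, w k⟫ = A j.castSucc k.castSucc := congrFun₂ hw j k
  have hquad (c : Fin n → ℝ) (s : ℝ) : 0 ≤ ‖∑ j, c j • w j‖ ^ 2
      + 2 * s * ∑ j, c j * A j.castSucc (Fin.last n) + s ^ 2 * A (Fin.last n) (Fin.last n) := by
    have hgram : c ⬝ᵥ gram ℝ w *ᵥ c = ‖∑ j, c j • w j‖ ^ 2 := by
      simpa [real_inner_self_eq_norm_sq] using star_dotProduct_gram_mulVec (𝕜 := ℝ) w c c
    have := hA.dotProduct_mulVec_nonneg (Fin.snoc c s)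
    rwa [star_trivial, hsymm.dotProduct_mulVec_snoc, ← hw, hgram] at this
  obtain ⟨v, hwv, hv⟩ := exists_inner_eq_and_norm_sq_eq hE w _ _ hquad
  refine ⟨v, Matrix.ext fun i j => ?_⟩
  induction i using Fin.lastCases <;> induction j using Fin.lastCases <;>
    simp [gram_apply, hwv, real_inner_comm _ v, ← hv, hsymm.apply, hw']

theorem exists_gram_eq_of_nat (hE : ¬ FiniteDimensional ℝ E) {K : Matrix ℕ ℕ ℝ}
    (hK : K.PosSemidef) : ∃ v : ℕ → E, gram ℝ v = K := by
  obtain ⟨v, hv⟩ := exists_seq_forall_snoc (fun n (w : Fin n → E) =>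
      gram ℝ w = K.submatrix Fin.val Fin.val) (Matrix.ext fun i => i.elim0)
    fun n w hw => exists_gram_snoc_eq hE w (hK.submatrix _) hw
  refine ⟨v, Matrix.ext fun m n => ?_⟩
  simpa using congrFun₂ (hv (max m n + 1)) ⟨m, by omega⟩ ⟨n, by omega⟩

theorem exists_gram_eq_of_countable (hE : ¬ FiniteDimensional ℝ E) {ι : Type*} [Countable ι]
    {K : Matrix ι ι ℝ} (hK : K.PosSemidef) : ∃ v : ι → E, gram ℝ v = K := by
  cases isEmpty_or_nonempty ι
  · exact ⟨isEmptyElim, Matrix.ext fun i => isEmptyElim i⟩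
  obtain ⟨σ, hσ⟩ := exists_surjective_nat ι
  obtain ⟨v, hv⟩ := exists_gram_eq_of_nat hE (hK.submatrix σ)
  refine ⟨v ∘ Function.surjInv hσ, Matrix.ext fun i j => ?_⟩
  simpa [Function.surjInv_eq] using congrFun₂ hv (Function.surjInv hσ i) (Function.surjInv hσ j)

end GramRealization

theorem lp.not_finiteDimensional_two {ι : Type*} [Infinite ι] :
    ¬ FiniteDimensional ℝ (lp (fun _ : ι => ℝ) 2) := fun _ =>
  Module.Finite.not_linearIndependent_of_infinite (ι := ι) _
    (HilbertBasis.ofRepr (LinearIsometryEquiv.refl ℝ _)).orthonormal.linearIndependent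

theorem Isometry.exists_isometry_of_dense {X Y : Type*} [PseudoMetricSpace X] [MetricSpace Y]
    [CompleteSpace Y] {S : Set X} (hS : Dense S) {f : S → Y} (hf : Isometry f) :
    ∃ g : X → Y, Isometry g := by
  have hfc := hf.uniformContinuous
  let g := ((isUniformInducing_val S).isDenseInducing hS.denseRange_val).extend f
  have hg : Continuous g :=
    (uniformContinuous_uniformly_extend (isUniformInducing_val S) hS.denseRange_val hfc).continuous
  have hgf (x : S) : g x = f x :=
    uniformly_extend_of_ind (isUniformInducing_val S) hS.denseRange_val hfc x
  refine ⟨g, Isometry.of_dist_eq fun x y => congrFun (Continuous.ext_on (hS.prod hS)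
    (f := fun p : X × X => dist (g p.1) (g p.2)) (by fun_prop) continuous_dist ?_) (x, y)⟩
  rintro ⟨x, y⟩ ⟨hx, hy⟩
  simpa [hgf ⟨x, hx⟩, hgf ⟨y, hy⟩, Subtype.dist_eq] using hf.dist_eq ⟨x, hx⟩ ⟨y, hy⟩

def schoenbergMatrix {X ι : Type*} [PseudoMetricSpace X] (b : X) (y : ι → X) : Matrix ι ι ℝ :=
  Matrix.of fun j k => dist b (y j) ^ 2 + dist b (y k) ^ 2 - dist (y j) (y k) ^ 2

theorem schoenbergMatrix_eq_smul_gram {E ι : Type*} [NormedAddCommGroup E] [InnerProductSpace ℝ E]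
    (p : E) (q : ι → E) : schoenbergMatrix p q = (2 : ℝ) • gram ℝ fun j => q j - p := by
  ext j k
  have := norm_sub_sq_real (q j - p) (q k - p)
  rw [sub_sub_sub_cancel_right] at this
  simp only [schoenbergMatrix, of_apply, Matrix.smul_apply, gram_apply, smul_eq_mul, dist_eq_norm,
    norm_sub_rev p, this]
  ring

theorem Isometry.schoenbergMatrix_comp {X Y ι : Type*} [PseudoMetricSpace X] [PseudoMetricSpace Y]
    {φ : X → Y} (hφ : Isometry φ) (b : X) (y : ι → X) :
    schoenbergMatrix (φ b) (φ ∘ y) = schoenbergMatrix b y := by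
  simp [schoenbergMatrix, hφ.dist_eq]

theorem posSemidef_schoenbergMatrix_of_fin {X : Type*} [PseudoMetricSpace X] (b : X)
    (h : ∀ n : ℕ, 2 ≤ n → ∀ y : Fin n → X, (schoenbergMatrix b y).PosSemidef) :
    (schoenbergMatrix b (id : X → X)).PosSemidef := by
  refine posSemidef_of_forall_finset fun s => ?_
  -- two dummy copies of `b` meet the size constraint; the submatrix below discards them
  let y : Fin (s.card + 2) → X := Fin.append (fun i => (s.equivFin.symm i : X)) fun _ => b
  convert (h _ (by omega) y).submatrix (Fin.castAdd 2 ∘ s.equivFin) using 1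
  ext i j
  simp [schoenbergMatrix, y]

theorem dist_eq_of_gram_eq_schoenbergMatrix {X E ι : Type*} [PseudoMetricSpace X]
    [NormedAddCommGroup E] [InnerProductSpace ℝ E] {b : X} {y : ι → X} {v : ι → E}
    (hv : gram ℝ v = (2 : ℝ)⁻¹ • schoenbergMatrix b y) (i j : ι) :
    dist (v i) (v j) = dist (y i) (y j) := by
  have hinner (i j) :
      ⟪v i, v j⟫ = (dist b (y i) ^ 2 + dist b (y j) ^ 2 - dist (y i) (y j) ^ 2) / 2 := by
    simpa [schoenbergMatrix, div_eq_inv_mul] using congrFun₂ hv i j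
  rw [← sq_eq_sq₀ dist_nonneg dist_nonneg, dist_eq_norm, norm_sub_sq_real,
    ← real_inner_self_eq_norm_sq, ← real_inner_self_eq_norm_sq, hinner, hinner, hinner]
  simp only [dist_self]
  ring

theorem exists_isometry_of_posSemidef_schoenbergMatrix {X E : Type*} [PseudoMetricSpace X]
    [TopologicalSpace.SeparableSpace X] [NormedAddCommGroup E] [InnerProductSpace ℝ E]
    [CompleteSpace E] (hE : ¬ FiniteDimensional ℝ E) (b : X)
    (h : (schoenbergMatrix b (id : X → X)).PosSemidef) : ∃ φ : X → E, Isometry φ := by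
  obtain ⟨S, hSc, hSd⟩ := TopologicalSpace.exists_countable_dense X
  have := hSc.to_subtype
  obtain ⟨v, hv⟩ := exists_gram_eq_of_countable hE
    ((h.submatrix ((↑) : S → X)).smul (by norm_num : (0 : ℝ) ≤ 2⁻¹))
  exact Isometry.exists_isometry_of_dense hSd
    (Isometry.of_dist_eq (dist_eq_of_gram_eq_schoenbergMatrix (y := ((↑) : S → X)) hv))

/-- Menger–Schoenberg: a separable metric space embeds isometrically into the
real Hilbert space ℓ² iff, for every `n ≥ 2` and every `(n+1)`-tuple of points,
the matrix `[ρ(x₀,x_j)² + ρ(x₀,x_k)² − ρ(x_j,x_k)²]` is positive semidefinite. -/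
theorem stmt1 {X : Type*} [MetricSpace X] [TopologicalSpace.SeparableSpace X] :
    (∃ φ : X → lp (fun _ : ℕ => ℝ) 2, ∀ x y : X, ‖φ x - φ y‖ = dist x y) ↔
    (∀ n : ℕ, 2 ≤ n → ∀ x : Fin (n + 1) → X,
      (Matrix.of fun j k : Fin n =>
        dist (x 0) (x j.succ) ^ 2 + dist (x 0) (x k.succ) ^ 2
          - dist (x j.succ) (x k.succ) ^ 2).PosSemidef) := by
  constructor
  · rintro ⟨φ, hφ⟩ n - x
    have hφ : Isometry φ := Isometry.of_dist_eq fun x y => by rw [dist_eq_norm, hφ]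
    show (schoenbergMatrix (x 0) fun j : Fin n => x j.succ).PosSemidef
    rw [← hφ.schoenbergMatrix_comp, schoenbergMatrix_eq_smul_gram]
    exact (posSemidef_gram ℝ _).smul zero_le_two
  · intro h
    rcases isEmpty_or_nonempty X with _ | ⟨⟨b⟩⟩
    · exact ⟨isEmptyElim, isEmptyElim⟩
    obtain ⟨φ, hφ⟩ := exists_isometry_of_posSemidef_schoenbergMatrix
      (lp.not_finiteDimensional_two (ι := ℕ)) b
      (posSemidef_schoenbergMatrix_of_fin b fun n hn y => h n hn (Fin.cons b y))
    exact ⟨φ, fun x y => by rw [← dist_eq_norm, hφ.dist_eq]⟩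
end

section
/- Let n ≥ 1 be an integer and 0 < ρ ≤ ∞, and let f(x) = Σ_{k ≥ 0} c_k x^k be a power series converging on [0, ρ) such that f[A] is positive semidefinite for every rank-one positive semidefinite n × n real matrix A with entries in [0, ρ). Suppose c_{m'} < 0 for some index m'. Then: (1) if ρ < ∞, there are at least n indices m < m' with c_m > 0; (2) if ρ = ∞, there are at least n indices m < m' with c_m > 0 and at least n indices m > m' with c_m > 0. -/
/-!
Suppose fewer than `n` coefficients below `m'` are positive, and collect them together with `m'`
into a set `T` of at most `n` exponents. Put `uⱼ = √x · 2ʲ`. Testing the positive semidefinite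
matrix `f[u uᵀ]` against a vector `v` gives `0 ≤ ∑ₘ cₘ gₘ² xᵐ` with `gₘ = ∑ⱼ vⱼ 2ʲᵐ`, and since
`[2ʲᵐ]_{m ∈ T}` is a Vandermonde matrix, `v` can be chosen with `g = 𝟙_{m'}` on `T`. Then every
coefficient `cₘ gₘ²` below `m'` is `≤ 0` while the `m'`-th one is `c_{m'} < 0`, so the series is
negative for small `x > 0`. When `ρ = ∞` the same test for large `x`, with `T` built from the
positive coefficients above `m'`, gives the second count.
-/

open scoped ENNReal
open Filter Topology

theorem summable_abs_mul_pow_of_lt {a : ℕ → ℝ} {r s : ℝ}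
    (hr : Summable fun k => a k * r ^ k) (hs : 0 ≤ s) (hsr : s < r) :
    Summable fun k => |a k| * s ^ k := by
  have hr0 : 0 < r := hs.trans_lt hsr
  obtain ⟨B, hB⟩ := hr.tendsto_atTop_zero.abs.bddAbove_range
  refine Summable.of_nonneg_of_le (fun k => by positivity) (fun k => ?_)
    ((summable_geometric_of_lt_one (div_nonneg hs hr0.le) ((div_lt_one hr0).mpr hsr)).mul_left B)
  calc |a k| * s ^ k = |a k * r ^ k| * (s / r) ^ k := by
        rw [abs_mul, abs_pow, abs_of_pos hr0, div_pow, mul_assoc, mul_div_cancel₀ _ (by positivity)]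
    _ ≤ B * (s / r) ^ k := by gcongr; exact hB ⟨k, rfl⟩

theorem eventually_tsum_mul_pow_neg_nhdsGT {a : ℕ → ℝ} {m : ℕ} {r : ℝ} (hr : 0 < r)
    (hs : Summable fun k => a k * r ^ k) (hlow : ∀ k < m, a k ≤ 0) (hm : a m < 0) :
    ∀ᶠ x in 𝓝[>] (0 : ℝ), ∑' k, a k * x ^ k < 0 := by
  obtain ⟨s, hs0, hsr⟩ := exists_between hr
  have habs := summable_abs_mul_pow_of_lt hs hs0.le hsr
  have hbound : Summable fun k => |a (k + m)| * s ^ k := by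
    refine (((summable_nat_add_iff m).mpr habs).mul_right (s ^ m)⁻¹).congr fun k => ?_
    rw [pow_add, mul_assoc, mul_assoc, mul_inv_cancel₀ (by positivity), mul_one]
  have htail : Tendsto (fun x => ∑' k, a (k + m) * x ^ k) (𝓝[>] 0) (𝓝 (a m)) := by
    have hg : ∑' k, a (k + m) * (0 : ℝ) ^ k = a m := by
      rw [tsum_eq_single 0 fun k hk => by simp [hk]]; simp
    refine hg ▸ tendsto_tsum_of_dominated_convergence hbound
      (fun k => ((continuous_pow k).const_mul _).continuousWithinAt.tendsto) ?_
    filter_upwards [Ioc_mem_nhdsGT hs0] with x ⟨hx0, hxs⟩ k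
    rw [norm_mul, norm_pow, Real.norm_eq_abs, Real.norm_of_nonneg hx0.le]
    gcongr
  filter_upwards [Ioc_mem_nhdsGT hs0, htail.eventually (eventually_lt_nhds hm)]
    with x ⟨hx0, hxs⟩ hneg
  have hsum : Summable fun k => a k * x ^ k := by
    refine .of_norm_bounded habs fun k => ?_
    rw [norm_mul, norm_pow, Real.norm_eq_abs, Real.norm_of_nonneg hx0.le]
    gcongr
  have hhead : ∑ k ∈ Finset.range m, a k * x ^ k ≤ 0 :=
    Finset.sum_nonpos fun k hk =>
      mul_nonpos_of_nonpos_of_nonneg (hlow k (Finset.mem_range.mp hk)) (by positivity)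
  have hsplit : ∑' k, a k * x ^ k
      = ∑ k ∈ Finset.range m, a k * x ^ k + x ^ m * ∑' k, a (k + m) * x ^ k := by
    rw [← hsum.sum_add_tsum_nat_add m, ← tsum_mul_left]
    congr 1
    exact tsum_congr fun k => by ring
  rw [hsplit]
  nlinarith [mul_neg_of_pos_of_neg (pow_pos hx0 m) hneg]

theorem eventually_tsum_mul_pow_neg_atTop {a : ℕ → ℝ} {m : ℕ}
    (hs : ∀ x, 0 ≤ x → Summable fun k => a k * x ^ k) (hhigh : ∀ k, m < k → a k ≤ 0)
    (hm : a m < 0) :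
    ∀ᶠ x in atTop, ∑' k, a k * x ^ k < 0 := by
  set p : ℝ → ℝ := fun y => ∑ k ∈ Finset.range (m + 1), a k * y ^ (m - k)
  have hp0 : p 0 = a m := by
    simp only [p]
    rw [Finset.sum_eq_single_of_mem m (Finset.self_mem_range_succ m)
      fun k hk hkm => by simp [Nat.sub_ne_zero_of_lt (by grind : k < m)]]
    simp
  have hp : Tendsto (fun x => p x⁻¹) atTop (𝓝 (a m)) :=
    hp0 ▸ ((by fun_prop : Continuous p).tendsto 0).comp tendsto_inv_atTop_zero
  filter_upwards [eventually_gt_atTop 0, hp.eventually (eventually_lt_nhds hm)] with x hx0 hneg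
  have hpoly : ∑ k ∈ Finset.range (m + 1), a k * x ^ k = x ^ m * p x⁻¹ := by
    rw [Finset.mul_sum]
    refine Finset.sum_congr rfl fun k hk => ?_
    rw [← pow_sub_mul_pow x (Finset.mem_range_succ_iff.mp hk), inv_pow]
    field_simp
  have htail : ∑' k, a (k + (m + 1)) * x ^ (k + (m + 1)) ≤ 0 :=
    tsum_nonpos fun k => mul_nonpos_of_nonpos_of_nonneg (hhigh _ (by omega)) (by positivity)
  rw [← (hs x hx0.le).sum_add_tsum_nat_add (m + 1), hpoly]
  nlinarith [mul_neg_of_pos_of_neg (pow_pos hx0 m) hneg]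

/-- `[(2 ^ j) ^ tᵢ]` is the Vandermonde matrix of the distinct nodes `2 ^ tᵢ`. -/
theorem exists_sum_mul_two_pow_pow_eq {n : ℕ} {t : Fin n → ℕ} (ht : Function.Injective t)
    (b : Fin n → ℝ) : ∃ v : Fin n → ℝ, ∀ i, ∑ j : Fin n, v j * ((2 : ℝ) ^ (j : ℕ)) ^ t i = b i := by
  have hnodes : Function.Injective fun i => (2 : ℝ) ^ t i :=
    (pow_right_injective₀ two_pos (by norm_num)).comp ht
  have hV : IsUnit (Matrix.vandermonde fun i => (2 : ℝ) ^ t i) :=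
    (Matrix.isUnit_iff_isUnit_det _).mpr (Matrix.det_vandermonde_ne_zero_iff.mpr hnodes).isUnit
  obtain ⟨v, hv⟩ := Matrix.mulVec_surjective_iff_isUnit.mpr hV b
  refine ⟨v, fun i => ?_⟩
  rw [← hv, Matrix.mulVec, dotProduct]
  exact Finset.sum_congr rfl fun j _ => by rw [Matrix.vandermonde_apply, pow_right_comm, mul_comm]

theorem exists_sum_mul_two_pow_pow_eq_on_finset {n : ℕ} {T : Finset ℕ} (hT : T.card ≤ n)
    (b : ℕ → ℝ) : ∃ v : Fin n → ℝ, ∀ m ∈ T, ∑ j : Fin n, v j * ((2 : ℝ) ^ (j : ℕ)) ^ m = b m := by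
  obtain ⟨T', hTT', hT'⟩ := Infinite.exists_superset_card_eq T n hT
  let e : Fin n ≃ T' := (T'.equivFin.trans (finCongr hT')).symm
  obtain ⟨v, hv⟩ := exists_sum_mul_two_pow_pow_eq (t := fun i => (e i : ℕ))
    (Subtype.val_injective.comp e.injective) (fun i => b (e i))
  refine ⟨v, fun m hm => ?_⟩
  simpa using hv (e.symm ⟨m, hTT' hm⟩)

theorem hasSum_mul_sq_sum_mul_pow {n : ℕ} {c : ℕ → ℝ} {u : Fin n → ℝ}
    (hs : ∀ j k, Summable fun m => c m * (u j * u k) ^ m) (v : Fin n → ℝ) :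
    HasSum (fun m => c m * (∑ j, v j * u j ^ m) ^ 2)
      (v ⬝ᵥ (Matrix.of fun j k => ∑' m, c m * (u j * u k) ^ m).mulVec v) := by
  have hterm : ∀ m, c m * (∑ j, v j * u j ^ m) ^ 2
      = ∑ j, ∑ k, v j * (c m * (u j * u k) ^ m) * v k := fun m => by
    rw [sq, Finset.sum_mul_sum, Finset.mul_sum]
    refine Finset.sum_congr rfl fun j _ => ?_
    rw [Finset.mul_sum]
    exact Finset.sum_congr rfl fun k _ => by ring
  have hvalue : v ⬝ᵥ (Matrix.of fun j k => ∑' m, c m * (u j * u k) ^ m).mulVec v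
      = ∑ j, ∑ k, v j * (∑' m, c m * (u j * u k) ^ m) * v k := by
    simp only [dotProduct, Matrix.mulVec, Matrix.of_apply, Finset.mul_sum]
    exact Finset.sum_congr rfl fun j _ => Finset.sum_congr rfl fun k _ => by ring
  rw [funext hterm, hvalue]
  exact hasSum_sum fun j _ => hasSum_sum fun k _ => ((hs j k).hasSum.mul_left (v j)).mul_right (v k)

theorem Set.exists_finset_card_eq_subset_or_subset_finset_card_lt {α : Type*} (s : Set α)
    (n : ℕ) : (∃ S : Finset α, S.card = n ∧ ↑S ⊆ s) ∨ ∃ P : Finset α, P.card < n ∧ s ⊆ ↑P := by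
  by_cases hs : s.Finite
  · by_cases hn : n ≤ hs.toFinset.card
    · obtain ⟨S, hS, hcard⟩ := Finset.exists_subset_card_eq hn
      exact .inl ⟨S, hcard, by simpa using hS⟩
    · exact .inr ⟨hs.toFinset, by omega, by simp⟩
  · obtain ⟨S, hS, hcard⟩ := Set.Infinite.exists_subset_card_eq hs n
    exact .inl ⟨S, hcard, hS⟩

def EntrywisePreservesRankOnePSD (n : ℕ) (ρ : ℝ≥0∞) (c : ℕ → ℝ) : Prop :=
  ∀ u : Fin n → ℝ, (∀ j k, 0 ≤ u j * u k ∧ ENNReal.ofReal (u j * u k) < ρ) →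
    (Matrix.of fun j k : Fin n => ∑' m : ℕ, c m * (u j * u k) ^ m).PosSemidef

section Preserver

variable {n : ℕ} {ρ : ℝ≥0∞} {c : ℕ → ℝ}

theorem exists_tsum_mul_sq_mul_pow_nonneg
    (hconv : ∀ x : ℝ, 0 ≤ x → ENNReal.ofReal x < ρ → Summable fun k => c k * x ^ k)
    (hpres : EntrywisePreservesRankOnePSD n ρ c) {T : Finset ℕ} (hT : T.card ≤ n)
    (b : ℕ → ℝ) :
    ∃ g : ℕ → ℝ, (∀ m ∈ T, g m = b m) ∧ ∀ x, 0 ≤ x → ENNReal.ofReal (x * 4 ^ n) < ρ →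
      Summable (fun m => c m * g m ^ 2 * x ^ m) ∧ 0 ≤ ∑' m, c m * g m ^ 2 * x ^ m := by
  obtain ⟨v, hv⟩ := exists_sum_mul_two_pow_pow_eq_on_finset hT b
  set g : ℕ → ℝ := fun m => ∑ j : Fin n, v j * ((2 : ℝ) ^ (j : ℕ)) ^ m
  refine ⟨g, hv, fun x hx hxρ => ?_⟩
  set u : Fin n → ℝ := fun j => √x * 2 ^ (j : ℕ)
  have hu : ∀ j k, 0 ≤ u j * u k ∧ ENNReal.ofReal (u j * u k) < ρ := by
    intro j k
    have huu : u j * u k = x * 2 ^ ((j : ℕ) + k) := by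
      simp only [u]
      rw [pow_add]
      linear_combination (2 ^ (j : ℕ) * 2 ^ (k : ℕ) : ℝ) * Real.mul_self_sqrt hx
    have h4 : (2 : ℝ) ^ ((j : ℕ) + k) ≤ 4 ^ n := by
      rw [show (4 : ℝ) ^ n = 2 ^ (n + n) by rw [pow_add, ← mul_pow]; norm_num]
      exact pow_le_pow_right₀ one_le_two (by omega)
    refine ⟨by positivity, lt_of_le_of_lt (ENNReal.ofReal_le_ofReal ?_) hxρ⟩
    rw [huu]
    gcongr
  have hterm : ∀ m, c m * (∑ j, v j * u j ^ m) ^ 2 = c m * g m ^ 2 * x ^ m := fun m => by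
    have : ∑ j, v j * u j ^ m = √x ^ m * g m := by
      simp only [u, g, mul_pow, Finset.mul_sum]
      exact Finset.sum_congr rfl fun j _ => by ring
    rw [this, mul_pow, pow_right_comm, Real.sq_sqrt hx]
    ring
  have hsum := hasSum_mul_sq_sum_mul_pow (fun j k => hconv _ (hu j k).1 (hu j k).2) v
  rw [funext hterm] at hsum
  refine ⟨hsum.summable, hsum.tsum_eq ▸ ?_⟩
  simpa only [star_trivial] using (hpres u hu).dotProduct_mulVec_nonneg v

theorem exists_nonneg_series_of_few_pos_coeffs
    (hconv : ∀ x : ℝ, 0 ≤ x → ENNReal.ofReal x < ρ → Summable fun k => c k * x ^ k)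
    (hpres : EntrywisePreservesRankOnePSD n ρ c) {m' : ℕ} (hm' : c m' < 0) {s : Set ℕ}
    (hm's : m' ∉ s) {P : Finset ℕ} (hP : P.card < n) (hsP : ∀ m ∈ s, 0 < c m → m ∈ P) :
    ∃ a : ℕ → ℝ, a m' < 0 ∧ (∀ m ∈ s, a m ≤ 0) ∧
      ∀ x, 0 ≤ x → ENNReal.ofReal (x * 4 ^ n) < ρ →
        Summable (fun m => a m * x ^ m) ∧ 0 ≤ ∑' m, a m * x ^ m := by
  obtain ⟨g, hg, hnonneg⟩ := exists_tsum_mul_sq_mul_pow_nonneg hconv hpres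
    ((P.card_insert_le m').trans hP) (fun m => if m = m' then 1 else 0)
  refine ⟨fun m => c m * g m ^ 2, ?_, fun m hm => ?_, hnonneg⟩
  · simpa [hg m' (P.mem_insert_self m')] using hm'
  · rcases le_or_gt (c m) 0 with hc | hc
    · exact mul_nonpos_of_nonpos_of_nonneg hc (sq_nonneg _)
    · have hmm' : m ≠ m' := fun h => hm's (h ▸ hm)
      simp [hg m (Finset.mem_insert_of_mem (hsP m hm hc)), hmm']

theorem exists_card_eq_pos_coeff_lt (hρ : 0 < ρ)
    (hconv : ∀ x : ℝ, 0 ≤ x → ENNReal.ofReal x < ρ → Summable fun k => c k * x ^ k)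
    (hpres : EntrywisePreservesRankOnePSD n ρ c) {m' : ℕ} (hm' : c m' < 0) :
    ∃ S : Finset ℕ, S.card = n ∧ ∀ m ∈ S, m < m' ∧ 0 < c m := by
  obtain ⟨S, hS, hSs⟩ | ⟨P, hP, hsP⟩ :=
    Set.exists_finset_card_eq_subset_or_subset_finset_card_lt {m | m < m' ∧ 0 < c m} n
  · exact ⟨S, hS, fun m hm => hSs hm⟩
  obtain ⟨a, ha', ha, hnonneg⟩ := exists_nonneg_series_of_few_pos_coeffs hconv hpres hm'
    (s := Set.Iio m') (lt_irrefl m') hP fun m hm hc => hsP ⟨hm, hc⟩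
  obtain ⟨r, hr, hrρ⟩ : ∃ r : ℝ, 0 < r ∧ ENNReal.ofReal (r * 4 ^ n) < ρ := by
    obtain ⟨y, -, hy, hyρ⟩ := ENNReal.lt_iff_exists_real_btwn.mp hρ
    exact ⟨y / 4 ^ n, div_pos (ENNReal.ofReal_pos.mp hy) (by positivity),
      by rwa [div_mul_cancel₀ _ (by positivity)]⟩
  obtain ⟨x, hneg, hx0, hxr⟩ := ((eventually_tsum_mul_pow_neg_nhdsGT hr
    (hnonneg r hr.le hrρ).1 ha ha').and (Ioo_mem_nhdsGT hr)).exists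
  have hxρ : ENNReal.ofReal (x * 4 ^ n) < ρ :=
    (ENNReal.ofReal_le_ofReal (mul_le_mul_of_nonneg_right hxr.le (by positivity))).trans_lt hrρ
  exact absurd (hnonneg x hx0.le hxρ).2 hneg.not_ge

theorem exists_card_eq_pos_coeff_gt
    (hconv : ∀ x : ℝ, 0 ≤ x → Summable fun k => c k * x ^ k)
    (hpres : EntrywisePreservesRankOnePSD n ⊤ c) {m' : ℕ} (hm' : c m' < 0) :
    ∃ S : Finset ℕ, S.card = n ∧ ∀ m ∈ S, m' < m ∧ 0 < c m := by
  obtain ⟨S, hS, hSs⟩ | ⟨P, hP, hsP⟩ :=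
    Set.exists_finset_card_eq_subset_or_subset_finset_card_lt {m | m' < m ∧ 0 < c m} n
  · exact ⟨S, hS, fun m hm => hSs hm⟩
  obtain ⟨a, ha', ha, hnonneg⟩ := exists_nonneg_series_of_few_pos_coeffs
    (fun x hx _ => hconv x hx) hpres hm' (s := Set.Ioi m') (lt_irrefl m') hP
    fun m hm hc => hsP ⟨hm, hc⟩
  obtain ⟨x, hneg, hx⟩ := ((eventually_tsum_mul_pow_neg_atTop
    (fun x hx => (hnonneg x hx ENNReal.ofReal_lt_top).1) ha ha').and (eventually_ge_atTop 0)).exists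
  exact absurd (hnonneg x hx ENNReal.ofReal_lt_top).2 hneg.not_ge

end Preserver

theorem stmt8_general (n : ℕ) (ρ : ℝ≥0∞) (hρ : 0 < ρ) (c : ℕ → ℝ)
    (hconv : ∀ x : ℝ, 0 ≤ x → ENNReal.ofReal x < ρ →
      Summable (fun k => c k * x ^ k))
    (hpres : ∀ u : Fin n → ℝ,
      (∀ j k, 0 ≤ u j * u k ∧ ENNReal.ofReal (u j * u k) < ρ) →
      (Matrix.of fun j k : Fin n =>
        ∑' m : ℕ, c m * (u j * u k) ^ m).PosSemidef)
    (m' : ℕ) (hm' : c m' < 0) :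
    (ρ < ⊤ → ∃ S : Finset ℕ, S.card = n ∧ ∀ m ∈ S, m < m' ∧ 0 < c m) ∧
    (ρ = ⊤ →
      (∃ S : Finset ℕ, S.card = n ∧ ∀ m ∈ S, m < m' ∧ 0 < c m) ∧
      (∃ S : Finset ℕ, S.card = n ∧ ∀ m ∈ S, m' < m ∧ 0 < c m)) := by
  have hbelow := exists_card_eq_pos_coeff_lt hρ hconv hpres hm'
  refine ⟨fun _ => hbelow, fun hρtop => ⟨hbelow, ?_⟩⟩
  subst hρtop
  exact exists_card_eq_pos_coeff_gt (fun x hx => hconv x hx ENNReal.ofReal_lt_top) hpres hm'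

/-- Horn–Loewner-type lemma (Belton–Guillot–Khare–Putinar, Khare–Tao): if a
power series `f(x) = Σ c_k x^k` convergent on `[0,ρ)` preserves positive
semidefiniteness entrywise on rank-one matrices in `P_n([0,ρ))`, and some
coefficient `c_{m'} < 0`, then at least `n` earlier coefficients are positive;
if moreover `ρ = ∞`, at least `n` later coefficients are positive as well. -/
theorem stmt8 (n : ℕ) (hn : 1 ≤ n) (ρ : ℝ≥0∞) (hρ : 0 < ρ) (c : ℕ → ℝ)
    (hconv : ∀ x : ℝ, 0 ≤ x → ENNReal.ofReal x < ρ →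
      Summable (fun k => c k * x ^ k))
    (hpres : ∀ u : Fin n → ℝ,
      (∀ j k, 0 ≤ u j * u k ∧ ENNReal.ofReal (u j * u k) < ρ) →
      (Matrix.of fun j k : Fin n =>
        ∑' m : ℕ, c m * (u j * u k) ^ m).PosSemidef)
    (m' : ℕ) (hm' : c m' < 0) :
    (ρ < ⊤ → ∃ S : Finset ℕ, S.card = n ∧ ∀ m ∈ S, m < m' ∧ 0 < c m) ∧
    (ρ = ⊤ →
      (∃ S : Finset ℕ, S.card = n ∧ ∀ m ∈ S, m < m' ∧ 0 < c m) ∧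
      (∃ S : Finset ℕ, S.card = n ∧ ∀ m ∈ S, m' < m ∧ 0 < c m)) :=
  stmt8_general n ρ hρ c hconv hpres m' hm'
end

section
/- Let 0 ≤ a < ∞ and ε > 0, let f : [a, a+ε) → ℝ be infinitely differentiable, fix an integer n ≥ 1, and fix distinct scalars u₁, …, uₙ ∈ (0, 1), writing u = (u₁, …, uₙ)ᵀ. Suppose that the n × n matrix f[a·J + t·u uᵀ] is positive semidefinite for all t ∈ [0, ε), where J is the n × n all-ones matrix. Then the first n non-zero derivatives of f at a are positive; that is, for every integer k ≥ 0, if f^(k)(a) ≠ 0 and the number of indices 0 ≤ j < k with f^(j)(a) ≠ 0 is strictly less than n, then f^(k)(a) > 0. -/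
/-!
Let `S` be the set of `j < k` with `f⁽ʲ⁾(a) ≠ 0`. By Descartes' rule of signs a nonzero real
polynomial with at most `#S + 1 ≤ n` monomials has fewer than `n` positive roots, so `(uᵢᵏ)ᵢ` is
not in the span of the vectors `(uᵢᵉ)ᵢ`, `e ∈ S`, and some `c` is orthogonal to all of these but
not to `(uᵢᵏ)ᵢ`. Expanding each entry of `f[a J + t u uᵀ]` by Taylor's formula, the quadratic form
`cᵀ f[a J + t u uᵀ] c ≥ 0` equals `f⁽ᵏ⁾(a) / k! · (∑ cᵢ uᵢᵏ)² · tᵏ + o(tᵏ)` as `t → 0⁺`, which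
forces `f⁽ᵏ⁾(a) ≥ 0`.
-/

open Finset Polynomial Matrix Function Filter Asymptotics Topology
open scoped Nat

namespace Polynomial

theorem length_filter_sign_coeffList {R : Type*} [Semiring R] [LinearOrder R] (P : R[X]) :
    ((P.coeffList.map SignType.sign).filter (· ≠ 0)).length = #P.support := by
  rcases eq_or_ne P 0 with rfl | hP
  · simp
  have hsupp : P.support = (range (P.natDegree + 1)).filter (fun i => P.coeff i ≠ 0) := by
    ext i
    simp only [mem_support_iff, mem_filter, mem_range, iff_and_self]
    exact fun h => Nat.lt_succ_of_le (le_natDegree_of_ne_zero h)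
  rw [coeffList, withBotSucc_degree_eq_natDegree_add_one hP, List.map_map, List.filter_map,
    List.length_map, List.filter_reverse, List.length_reverse, hsupp]
  simp [Finset.card, Multiset.range, Function.comp_def]

theorem signVariations_lt_card_support {R : Type*} [Semiring R] [LinearOrder R] {P : R[X]}
    (hP : P ≠ 0) : P.signVariations < #P.support := by
  have hdestutter := (List.destutter_sublist (· ≠ ·)
    ((P.coeffList.map SignType.sign).filter (· ≠ 0))).length_le
  rw [length_filter_sign_coeffList] at hdestutter
  have hsupport : 0 < #P.support := card_pos.2 (support_nonempty.2 hP)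
  unfold signVariations
  omega

theorem card_lt_card_support_of_pos_roots {R : Type*} [CommRing R] [LinearOrder R]
    [IsStrictOrderedRing R] {P : R[X]} (hP : P ≠ 0) {T : Finset R} (hpos : ∀ x ∈ T, 0 < x)
    (hroot : ∀ x ∈ T, P.IsRoot x) : #T < #P.support := by
  calc #T ≤ (P.roots.filter (0 < ·)).toFinset.card := by
        refine card_le_card fun x hx => ?_
        simp [hP, (hroot x hx).eq_zero, hpos x hx]
    _ ≤ P.roots.countP (0 < ·) := by
        rw [Multiset.countP_eq_card_filter]; exact Multiset.toFinset_card_le _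
    _ ≤ P.signVariations := roots_countP_pos_le_signVariations P
    _ < #P.support := signVariations_lt_card_support hP

end Polynomial

theorem pow_notMem_span_pow {ι : Type*} [Fintype ι] {u : ι → ℝ} (hu : ∀ i, 0 < u i)
    (huinj : Injective u) {S : Finset ℕ} {k : ℕ} (hk : k ∉ S) (hS : #S < Fintype.card ι) :
    (fun i => u i ^ k) ∉ Submodule.span ℝ ((fun e i => u i ^ e) '' (S : Set ℕ)) := by
  rw [Finsupp.mem_span_image_iff_linearCombination]
  rintro ⟨l, hlS, hl⟩
  rw [Finsupp.linearCombination_apply_of_mem_supported ℝ hlS] at hl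
  set P : ℝ[X] := X ^ k - ∑ e ∈ S, monomial e (l e)
  have hP : P ≠ 0 := by
    intro h
    have := congrArg (coeff · k) h
    simp [P, coeff_monomial, hk] at this
  have hsupp : P.support ⊆ insert k S := by
    intro e he
    by_contra h
    rw [mem_insert, not_or] at h
    exact mem_support_iff.1 he (by simp [P, coeff_X_pow, coeff_monomial, h.1, h.2])
  have hroot : ∀ x ∈ univ.image u, P.IsRoot x := by
    simp only [mem_image, mem_univ, true_and, forall_exists_index, forall_apply_eq_imp_iff]
    intro i
    have := congrFun hl i
    simp only [Finset.sum_apply, Pi.smul_apply, smul_eq_mul] at this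
    simp [P, eval_finsetSum, this]
  have := card_lt_card_support_of_pos_roots hP (T := univ.image u) (by simpa using hu) hroot
  rw [card_image_of_injective _ huinj, card_univ] at this
  have := (card_le_card hsupp).trans (card_insert_le k S)
  omega

theorem exists_dotProduct_pow_eq_zero_ne_zero {ι : Type*} [Fintype ι] {u : ι → ℝ}
    (hu : ∀ i, 0 < u i) (huinj : Injective u) {S : Finset ℕ} {k : ℕ} (hk : k ∉ S)
    (hS : #S < Fintype.card ι) :
    ∃ c : ι → ℝ, (∀ e ∈ S, (fun i => u i ^ e) ⬝ᵥ c = 0) ∧ (fun i => u i ^ k) ⬝ᵥ c ≠ 0 := by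
  classical
  obtain ⟨L, hLk, hLS⟩ :=
    Submodule.exists_dual_map_eq_bot_of_notMem (pow_notMem_span_pow hu huinj hk hS) inferInstance
  have hL (x : ι → ℝ) : L x = x ⬝ᵥ fun i => L (Pi.single i 1) := by
    rw [LinearMap.pi_apply_eq_sum_univ L x, dotProduct]
    refine sum_congr rfl fun i _ => ?_
    have hsingle : (fun j => if i = j then (1 : ℝ) else 0) = Pi.single i 1 := by
      ext j
      simp [Pi.single_apply, eq_comm]
    rw [smul_eq_mul, hsingle]
  refine ⟨fun i => L (Pi.single i 1), fun e he => ?_, by rwa [← hL]⟩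
  rw [← hL, ← Submodule.mem_bot ℝ, ← hLS]
  exact Submodule.mem_map_of_mem (Submodule.subset_span ⟨e, he, rfl⟩)

theorem nonneg_of_isLittleO_sub_const_mul_pow {g : ℝ → ℝ} {C : ℝ} {k : ℕ}
    (hg : ∀ᶠ t in 𝓝[>] 0, 0 ≤ g t)
    (hC : (fun t => g t - C * t ^ k) =o[𝓝[>] 0] fun t => t ^ k) : 0 ≤ C := by
  by_contra! hneg
  have hsmall := hC.bound (show 0 < -C / 2 by linarith)
  obtain ⟨t, ht, hgt, hbound⟩ := (eventually_mem_nhdsWithin.and (hg.and hsmall)).exists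
  have htk : 0 < t ^ k := pow_pos ht k
  rw [Real.norm_eq_abs, Real.norm_eq_abs, abs_of_pos htk, abs_le] at hbound
  nlinarith [hbound.2]

theorem isLittleO_comp_mul_sub_taylorWithinEval {E : Type*} [NormedAddCommGroup E]
    [NormedSpace ℝ E] {f : ℝ → E} {s : Set ℝ} {a μ : ℝ} {k : ℕ} (hs : Convex ℝ s) (ha : a ∈ s)
    (hf : ContDiffOn ℝ k f s) (hμ : ∀ᶠ t in 𝓝[>] 0, a + t * μ ∈ s) :
    (fun t => f (a + t * μ) - taylorWithinEval f k s a (a + t * μ)) =o[𝓝[>] 0]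
      fun t => t ^ k := by
  have hlim : Tendsto (fun t => a + t * μ) (𝓝[>] 0) (𝓝[s] a) := by
    refine tendsto_nhdsWithin_iff.2 ⟨?_, hμ⟩
    refine tendsto_nhdsWithin_of_tendsto_nhds ?_
    simpa using ((continuous_mul_const μ).const_add a).tendsto 0
  refine ((taylor_isLittleO hs ha hf).comp_tendsto hlim).trans_isBigO ?_
  simp only [Function.comp_def, add_sub_cancel_left, mul_pow]
  exact (isBigO_const_mul_self (μ ^ k) _ _).congr_left fun t => mul_comm _ _

theorem eventually_add_mul_mem_Ico {a ε μ : ℝ} (hε : 0 < ε) (hμ : μ ∈ Set.Icc 0 1) :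
    ∀ᶠ t in 𝓝[>] 0, a + t * μ ∈ Set.Ico a (a + ε) := by
  filter_upwards [Ioo_mem_nhdsGT hε] with t ht
  constructor <;> nlinarith [ht.1, ht.2, hμ.1, hμ.2]

theorem Matrix.PosSemidef.sum_sum_mul_mul_nonneg {ι : Type*} [Fintype ι] {M : Matrix ι ι ℝ}
    (hM : M.PosSemidef) (c : ι → ℝ) : 0 ≤ ∑ j, ∑ l, c j * c l * M j l := by
  have := hM.dotProduct_mulVec_nonneg c
  simp only [star_trivial, dotProduct, mulVec, mul_sum] at this
  exact this.trans_eq (sum_congr rfl fun j _ => sum_congr rfl fun l _ => by ring)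

theorem sum_sum_mul_mul_pow {ι : Type*} [Fintype ι] (c u : ι → ℝ) (m : ℕ) (t : ℝ) :
    ∑ j, ∑ l, c j * c l * (t * (u j * u l)) ^ m = t ^ m * ((fun i => u i ^ m) ⬝ᵥ c) ^ 2 := by
  rw [sq, dotProduct, sum_mul_sum, mul_sum]
  refine sum_congr rfl fun j _ => ?_
  rw [mul_sum]
  refine sum_congr rfl fun l _ => ?_
  ring

theorem sum_sum_mul_mul_taylorWithinEval {ι : Type*} [Fintype ι] {f : ℝ → ℝ} {s : Set ℝ}
    {a : ℝ} {k : ℕ} {c u : ι → ℝ}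
    (hc : ∀ m < k, iteratedDerivWithin m f s a = 0 ∨ (fun i => u i ^ m) ⬝ᵥ c = 0) (t : ℝ) :
    ∑ j, ∑ l, c j * c l * taylorWithinEval f k s a (a + t * (u j * u l)) =
      (k ! : ℝ)⁻¹ * iteratedDerivWithin k f s a * ((fun i => u i ^ k) ⬝ᵥ c) ^ 2 * t ^ k := by
  have hterm (m : ℕ) : ∑ j, ∑ l, c j * c l * (((m ! : ℝ)⁻¹ * (t * (u j * u l)) ^ m) *
      iteratedDerivWithin m f s a) =
      (m ! : ℝ)⁻¹ * iteratedDerivWithin m f s a * (t ^ m * ((fun i => u i ^ m) ⬝ᵥ c) ^ 2) := by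
    rw [← sum_sum_mul_mul_pow c u m t, mul_sum]
    refine sum_congr rfl fun j _ => ?_
    rw [mul_sum]
    refine sum_congr rfl fun l _ => ?_
    ring
  calc ∑ j, ∑ l, c j * c l * taylorWithinEval f k s a (a + t * (u j * u l))
      = ∑ m ∈ range (k + 1), ∑ j, ∑ l, c j * c l *
          (((m ! : ℝ)⁻¹ * (t * (u j * u l)) ^ m) * iteratedDerivWithin m f s a) := by
        simp only [taylor_within_apply, add_sub_cancel_left, smul_eq_mul, mul_sum]
        rw [sum_congr rfl fun j _ => sum_comm, sum_comm]
    _ = ∑ m ∈ range (k + 1),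
          (m ! : ℝ)⁻¹ * iteratedDerivWithin m f s a * (t ^ m * ((fun i => u i ^ m) ⬝ᵥ c) ^ 2) :=
        sum_congr rfl fun m _ => hterm m
    _ = _ := by
        rw [sum_range_succ, sum_eq_zero fun m hm => ?_, zero_add]
        · ring
        · rcases hc m (mem_range.1 hm) with h | h <;> simp [h]

theorem isLittleO_sum_sum_mul_mul_sub_taylorWithinEval {ι : Type*} [Fintype ι] {f : ℝ → ℝ}
    {s : Set ℝ} {a : ℝ} {k : ℕ} (hs : Convex ℝ s) (ha : a ∈ s) (hf : ContDiffOn ℝ k f s)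
    (c : ι → ℝ) {μ : ι → ι → ℝ} (hμ : ∀ j l, ∀ᶠ t in 𝓝[>] 0, a + t * μ j l ∈ s) :
    (fun t => ∑ j, ∑ l, c j * c l *
        (f (a + t * μ j l) - taylorWithinEval f k s a (a + t * μ j l))) =o[𝓝[>] 0]
      fun t => t ^ k :=
  IsLittleO.fun_sum fun j _ => IsLittleO.fun_sum fun l _ =>
    (isLittleO_comp_mul_sub_taylorWithinEval hs ha hf (hμ j l)).const_mul_left _

open scoped Classical in
theorem stmt9_general (a ε : ℝ) (hε : 0 < ε) (f : ℝ → ℝ)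
    (hf : ContDiffOn ℝ (⊤ : ℕ∞) f (Set.Ico a (a + ε)))
    (n : ℕ) (u : Fin n → ℝ)
    (hu : ∀ j, u j ∈ Set.Ioo (0 : ℝ) 1) (huinj : Function.Injective u)
    (hpres : ∀ t ∈ Set.Ico (0 : ℝ) ε,
      (Matrix.of fun j k : Fin n => f (a + t * (u j * u k))).PosSemidef)
    (k : ℕ) (hk : iteratedDerivWithin k f (Set.Ico a (a + ε)) a ≠ 0)
    (hcard : ((Finset.range k).filter
        (fun j => iteratedDerivWithin j f (Set.Ico a (a + ε)) a ≠ 0)).card < n) :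
    0 < iteratedDerivWithin k f (Set.Ico a (a + ε)) a := by
  set s := Set.Ico a (a + ε)
  obtain ⟨c, hcS, hck⟩ := exists_dotProduct_pow_eq_zero_ne_zero (fun i => (hu i).1) huinj
    (k := k) (by simp) (hcard.trans_eq (Fintype.card_fin n).symm)
  have hvanish (m : ℕ) (hm : m < k) :
      iteratedDerivWithin m f s a = 0 ∨ (fun i => u i ^ m) ⬝ᵥ c = 0 :=
    or_iff_not_imp_left.2 fun h => hcS m (mem_filter.2 ⟨mem_range.2 hm, h⟩)
  have hentries (j l : Fin n) : ∀ᶠ t in 𝓝[>] 0, a + t * (u j * u l) ∈ s :=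
    eventually_add_mul_mem_Ico hε ⟨mul_nonneg (hu j).1.le (hu l).1.le,
      mul_le_one₀ (hu j).2.le (hu l).1.le (hu l).2.le⟩
  have hnonneg : ∀ᶠ t in 𝓝[>] 0, 0 ≤ ∑ j, ∑ l, c j * c l * f (a + t * (u j * u l)) := by
    filter_upwards [Ioo_mem_nhdsGT hε] with t ht
    exact (hpres t ⟨ht.1.le, ht.2⟩).sum_sum_mul_mul_nonneg c
  have hlittleO := isLittleO_sum_sum_mul_mul_sub_taylorWithinEval (s := s) (k := k)
    (convex_Ico a (a + ε)) ⟨le_rfl, by linarith⟩ (hf.of_le (by exact_mod_cast le_top)) c hentries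
  have hC := nonneg_of_isLittleO_sub_const_mul_pow hnonneg (hlittleO.congr_left fun t => by
    rw [← sum_sum_mul_mul_taylorWithinEval hvanish t]
    simp only [mul_sub, sum_sub_distrib])
  have hfactorial : (0 : ℝ) < (k ! : ℝ)⁻¹ := by positivity
  rw [mul_nonneg_iff_of_pos_right (sq_pos_of_ne_zero hck),
    mul_nonneg_iff_of_pos_left hfactorial] at hC
  exact hC.lt_of_ne hk.symm

open scoped Classical in
/-- Khare's strengthened Horn–Loewner theorem (case `p = 0`): if `f` is smooth
on `[a, a+ε)` with `a ≥ 0`, `u ∈ (0,1)^n` has distinct coordinates, and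
`f[a 1_{n×n} + t u uᵀ]` is positive semidefinite for all `t ∈ [0,ε)`, then the
first `n` non-zero derivatives of `f` at `a` are positive. -/
theorem stmt9 (a ε : ℝ) (ha : 0 ≤ a) (hε : 0 < ε) (f : ℝ → ℝ)
    (hf : ContDiffOn ℝ (⊤ : ℕ∞) f (Set.Ico a (a + ε)))
    (n : ℕ) (hn : 1 ≤ n) (u : Fin n → ℝ)
    (hu : ∀ j, u j ∈ Set.Ioo (0 : ℝ) 1) (huinj : Function.Injective u)
    (hpres : ∀ t ∈ Set.Ico (0 : ℝ) ε,
      (Matrix.of fun j k : Fin n => f (a + t * (u j * u k))).PosSemidef)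
    (k : ℕ) (hk : iteratedDerivWithin k f (Set.Ico a (a + ε)) a ≠ 0)
    (hcard : ((Finset.range k).filter
        (fun j => iteratedDerivWithin j f (Set.Ico a (a + ε)) a ≠ 0)).card < n) :
    0 < iteratedDerivWithin k f (Set.Ico a (a + ε)) a :=
  stmt9_general a ε hε f hf n u hu huinj hpres k hk hcard
end

section
/- Let f : (0, ∞) → ℝ. The entrywise map f[−] preserves positive semidefiniteness on P_2((0, ∞)) if and only if f is non-negative, non-decreasing, and multiplicatively mid-convex, i.e., f(√(xy))² ≤ f(x) f(y) for all x, y > 0. -/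
/-!
A real symmetric `2 × 2` matrix `[a b; b c]` is positive semidefinite iff `a, c ≥ 0` and
`b² ≤ a c`, so preservation on `P_2((0,∞))` says exactly: `0 < b² ≤ a c` implies
`f a, f c ≥ 0` and `f(b)² ≤ f(a) f(c)`. Taking `a = b = c` gives non-negativity,
`[y x; x x]` with `x ≤ y` gives monotonicity, and `b = √(a c)` gives mid-convexity.
Conversely `b ≤ √(a c)`, so `f(b)² ≤ f(√(a c))² ≤ f(a) f(c)`.
-/

open Matrix

theorem Matrix.posSemidef_fin_two_iff {a b c : ℝ} :
    (!![a, b; b, c]).PosSemidef ↔ 0 ≤ a ∧ 0 ≤ c ∧ b ^ 2 ≤ a * c := by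
  constructor
  · intro h
    have hdet := h.det_nonneg
    rw [det_fin_two_of] at hdet
    exact ⟨by simpa using h.diag_nonneg (i := 0), by simpa using h.diag_nonneg (i := 1),
      by nlinarith⟩
  · rintro ⟨ha, hc, hb⟩
    refine PosSemidef.of_dotProduct_mulVec_nonneg ?_ fun x => ?_
    · simp [IsHermitian, conjTranspose, ← Matrix.ext_iff, Fin.forall_fin_two]
    · have hq : star x ⬝ᵥ (!![a, b; b, c] *ᵥ x) =
          a * x 0 ^ 2 + 2 * b * (x 0 * x 1) + c * x 1 ^ 2 := by
        simp only [dotProduct, Pi.star_apply, star_trivial, mulVec, of_apply, cons_val',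
          cons_val_fin_one, Fin.sum_univ_two, Fin.isValue, cons_val_zero, cons_val_one]
        ring
      rw [hq]
      -- `a q(x) = (a x₀ + b x₁)² + (a c - b²) x₁²`
      rcases ha.eq_or_lt with rfl | ha
      · obtain rfl : b = 0 := by nlinarith
        nlinarith [mul_nonneg hc (sq_nonneg (x 1))]
      · refine nonneg_of_mul_nonneg_right ?_ ha
        nlinarith [sq_nonneg (a * x 0 + b * x 1), mul_nonneg (sub_nonneg.mpr hb) (sq_nonneg (x 1))]

theorem Matrix.IsSymm.eq_fin_two {α : Type*} {A : Matrix (Fin 2) (Fin 2) α} (hA : A.IsSymm) :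
    A = !![A 0 0, A 0 1; A 0 1, A 1 1] := by
  nth_rw 1 [A.eta_fin_two]
  rw [hA.apply 0 1]

theorem Matrix.map_fin_two_of {α β : Type*} (f : α → β) (a b c d : α) :
    (!![a, b; c, d]).map f = !![f a, f b; f c, f d] := by
  ext i j
  fin_cases i <;> fin_cases j <;> rfl

theorem forall_map_posSemidef_fin_two_iff (f : ℝ → ℝ) :
    (∀ A : Matrix (Fin 2) (Fin 2) ℝ, A.PosSemidef →
        (∀ j k, 0 < A j k) → (A.map f).PosSemidef) ↔
    ∀ a b c : ℝ, 0 < a → 0 < b → 0 < c → b ^ 2 ≤ a * c →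
      0 ≤ f a ∧ 0 ≤ f c ∧ f b ^ 2 ≤ f a * f c := by
  constructor
  · intro H a b c ha hb hc hbac
    have hpos : ∀ j k, 0 < !![a, b; b, c] j k := by
      simp [Fin.forall_fin_two, ha, hb, hc]
    have := H _ (posSemidef_fin_two_iff.mpr ⟨ha.le, hc.le, hbac⟩) hpos
    rwa [map_fin_two_of, posSemidef_fin_two_iff] at this
  · intro H A hA hpos
    have hAeq : A = !![A 0 0, A 0 1; A 0 1, A 1 1] :=
      (isHermitian_iff_isSymm.mp hA.isHermitian).eq_fin_two
    rw [hAeq, posSemidef_fin_two_iff] at hA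
    rw [hAeq, map_fin_two_of, posSemidef_fin_two_iff]
    exact H _ _ _ (hpos 0 0) (hpos 0 1) (hpos 1 1) hA.2.2

theorem forall_sq_apply_le_mul_iff (f : ℝ → ℝ) :
    (∀ a b c : ℝ, 0 < a → 0 < b → 0 < c → b ^ 2 ≤ a * c →
      0 ≤ f a ∧ 0 ≤ f c ∧ f b ^ 2 ≤ f a * f c) ↔
    ((∀ x : ℝ, 0 < x → 0 ≤ f x) ∧
      MonotoneOn f (Set.Ioi (0 : ℝ)) ∧
      (∀ x y : ℝ, 0 < x → 0 < y →
        f (Real.sqrt (x * y)) ^ 2 ≤ f x * f y)) := by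
  constructor
  · intro H
    have hnn : ∀ x : ℝ, 0 < x → 0 ≤ f x := fun x hx => (H x x x hx hx hx (by nlinarith)).1
    refine ⟨hnn, fun x hx y hy hxy => ?_, fun x y hx hy => ?_⟩
    · -- the matrix `[y x; x x]` gives `f(x)² ≤ f(y) f(x)`
      have hsq := (H y x x hy hx hx (by nlinarith [hx.out])).2.2
      rcases (hnn x hx).eq_or_lt with h0 | h0
      · exact h0 ▸ hnn y hy
      · nlinarith
    · have hsq : Real.sqrt (x * y) ^ 2 = x * y := Real.sq_sqrt (by positivity)
      exact (H x _ y hx (by positivity) hy hsq.le).2.2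
  · rintro ⟨hnn, hmono, hmid⟩ a b c ha hb hc hbac
    have hb_le : b ≤ Real.sqrt (a * c) := Real.le_sqrt_of_sq_le hbac
    have hfb : f b ≤ f (Real.sqrt (a * c)) := hmono hb (hb.trans_le hb_le) hb_le
    refine ⟨hnn a ha, hnn c hc, ?_⟩
    calc f b ^ 2 ≤ f (Real.sqrt (a * c)) ^ 2 := pow_le_pow_left₀ (hnn b hb) hfb 2
      _ ≤ f a * f c := hmid a c ha hc

/-- Vasudeva's `2 × 2` characterization: `f : (0,∞) → ℝ` preserves positive
semidefiniteness entrywise on `P_2((0,∞))` iff `f` is non-negative,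
non-decreasing, and multiplicatively mid-convex on `(0,∞)`. -/
theorem stmt11 (f : ℝ → ℝ) :
    (∀ A : Matrix (Fin 2) (Fin 2) ℝ, A.PosSemidef →
        (∀ j k, 0 < A j k) → (A.map f).PosSemidef) ↔
    ((∀ x : ℝ, 0 < x → 0 ≤ f x) ∧
      MonotoneOn f (Set.Ioi (0 : ℝ)) ∧
      (∀ x y : ℝ, 0 < x → 0 < y →
        f (Real.sqrt (x * y)) ^ 2 ≤ f x * f y)) :=
  (forall_map_posSemidef_fin_two_iff f).trans (forall_sq_apply_le_mul_iff f)
end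

section
/- (FitzGerald–Horn) Let N ≥ 2 be an integer. (1) For every real number α ≥ N − 2 and every positive semidefinite N × N real matrix A = [a_{jk}] with non-negative entries, the entrywise power A^{∘α} := [a_{jk}^α] is positive semidefinite (with the convention 0^0 = 1). (2) For every real α with 0 < α < N − 2 that is not an integer, there exists a positive semidefinite N × N real matrix A with strictly positive entries such that A^{∘α} is not positive semidefinite. -/
/-!
If `x ↦ x ^ (α - 1)` preserves positive semidefiniteness entrywise in size `n` and `α ≥ 1`, then
`x ↦ x ^ α` is Loewner monotone in size `n`: along the segment from `B` to `C`, the derivative of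
the entrywise `α`-th power is `α` times the Schur product of `C - B` with the entrywise
`(α - 1)`-th power. Monotonicity in size `n` gives positivity in size `n + 1`, by writing `A` as the
rank-one matrix `ζ ζᵀ / a` built from its last column plus the Schur complement of its last entry;
the entrywise power of the first is again of rank one, the second is supported on the first `n`
indices. Induction on `n` gives the bound `α ≥ N - 2` (FitzGerald–Horn).

Conversely, for `k = ⌊α⌋ + 2 ≤ N - 1` the binomial coefficient `binom(α, k)` is negative. Taking
distinct positive nodes `a` and a vector `z` orthogonal to `a ^ 0, …, a ^ (k - 1)` with
`zᵀ a ^ k = 1`, the binomial series gives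
`zᵀ (1 + ε a aᵀ) ^ α z = binom(α, k) ε ^ k + O(ε ^ (k + 1))`, which is negative for small `ε > 0`.
-/

open Matrix Finset Filter Asymptotics Topology

namespace Matrix

variable {ι : Type*}

lemma IsHermitian.apply_comm {M : Matrix ι ι ℝ} (hM : M.IsHermitian) (i j : ι) :
    M i j = M j i := by
  simpa using (hM.apply i j).symm

lemma IsHermitian.map_rpow {M : Matrix ι ι ℝ} (hM : M.IsHermitian) (α : ℝ) :
    (M.map (· ^ α)).IsHermitian :=
  hM.map _ fun _ => rfl

variable [Fintype ι]

lemma dotProduct_mulVec_eq_sum_sum (M : Matrix ι ι ℝ) (x : ι → ℝ) :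
    x ⬝ᵥ (M *ᵥ x) = ∑ i, ∑ j, x i * M i j * x j := by
  simp [dotProduct, mulVec, Finset.mul_sum, mul_assoc]

lemma posSemidef_of_subsingleton [Subsingleton ι] {M : Matrix ι ι ℝ} (hM : ∀ i, 0 ≤ M i i) :
    M.PosSemidef := by
  refine PosSemidef.of_dotProduct_mulVec_nonneg ?_ fun x => ?_
  · ext i j
    rw [Subsingleton.elim i j]
    simp
  · rw [star_trivial, dotProduct_mulVec_eq_sum_sum]
    refine sum_nonneg fun i _ => sum_nonneg fun j _ => ?_
    rw [Subsingleton.elim j i]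
    nlinarith [hM i, mul_self_nonneg (x i)]

lemma PosSemidef.apply_eq_zero_of_diag_eq_zero [DecidableEq ι] {A : Matrix ι ι ℝ}
    (hA : A.PosSemidef) {i : ι} (hi : A i i = 0) (j : ι) : A j i = 0 := by
  have h := (hA.dotProduct_mulVec_zero_iff (Pi.single i 1)).mp (by simp [hi])
  simpa using congrFun h j

lemma posSemidef_smul_vecMulVec_self {c : ℝ} (hc : 0 ≤ c) (u : ι → ℝ) :
    (c • vecMulVec u u).PosSemidef :=
  (posSemidef_vecMulVec_self_star u).smul hc

/-- The Schur complement of the diagonal entry `A i i` (just `A` when `A i i = 0`, as `0⁻¹ = 0`). -/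
lemma PosSemidef.sub_inv_smul_vecMulVec [DecidableEq ι] {A : Matrix ι ι ℝ} (hA : A.PosSemidef)
    (i : ι) : (A - (A i i)⁻¹ • vecMulVec (A i) (A i)).PosSemidef := by
  refine PosSemidef.of_dotProduct_mulVec_nonneg
    (hA.isHermitian.sub ((posSemidef_vecMulVec_self_star (A i)).isHermitian.smul ?_)) fun x => ?_
  · exact IsSelfAdjoint.all _
  have hcol : A *ᵥ Pi.single i 1 = A i := by
    ext j; simp [hA.isHermitian.apply_comm j i]
  obtain ⟨s, hs⟩ : ∃ s, A i ⬝ᵥ x = s := ⟨_, rfl⟩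
  have hAx : (A *ᵥ x) i = s := hs
  have hxs : x ⬝ᵥ A i = s := (dotProduct_comm _ _).trans hs
  have hc : (A i i)⁻¹ * A i i * (A i i)⁻¹ = (A i i)⁻¹ := by simpa using mul_inv_mul_cancel (A i i)⁻¹
  have key := hA.dotProduct_mulVec_nonneg (x - ((A i i)⁻¹ * s) • Pi.single i 1)
  simp only [star_trivial, mulVec_sub, mulVec_smul, hcol, dotProduct_sub, sub_dotProduct,
    dotProduct_smul, smul_dotProduct, single_dotProduct, sub_mulVec, smul_mulVec,
    vecMulVec_mulVec, op_smul_eq_smul, smul_eq_mul, one_mul, hxs, hs, hAx] at key ⊢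
  linear_combination key + s ^ 2 * hc

lemma posSemidef_of_submatrix_castSucc {n : ℕ} {M : Matrix (Fin (n + 1)) (Fin (n + 1)) ℝ}
    (hM : M.IsHermitian) (hlast : ∀ j, M j (Fin.last n) = 0)
    (h : (M.submatrix Fin.castSucc Fin.castSucc).PosSemidef) : M.PosSemidef := by
  refine PosSemidef.of_dotProduct_mulVec_nonneg hM fun x => ?_
  have hlast' : ∀ j, M (Fin.last n) j = 0 := fun j => (hM.apply_comm _ _).trans (hlast j)
  have := h.dotProduct_mulVec_nonneg (x ∘ Fin.castSucc)
  simpa [dotProduct_mulVec_eq_sum_sum, Fin.sum_univ_castSucc, hlast, hlast'] using this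

end Matrix

lemma hasDerivAt_rpow_add_mul {α : ℝ} (hα : 1 ≤ α) (b d t : ℝ) :
    HasDerivAt (fun s => (b + s * d) ^ α) (α * (b + t * d) ^ (α - 1) * d) t := by
  convert ((hasDerivAt_mul_const d).const_add b).rpow_const (Or.inr hα) using 1
  ring

section EntrywisePower

variable (ι : Type*) [Fintype ι]

def MapRpowPreservesPosSemidef (α : ℝ) : Prop :=
  ∀ A : Matrix ι ι ℝ, A.PosSemidef → (∀ i j, 0 ≤ A i j) → (A.map (· ^ α)).PosSemidef

def MapRpowMonotone (α : ℝ) : Prop :=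
  ∀ B C : Matrix ι ι ℝ, B.PosSemidef → (C - B).PosSemidef → (∀ i j, 0 ≤ B i j) →
    (∀ i j, 0 ≤ C i j) → (C.map (· ^ α) - B.map (· ^ α)).PosSemidef

variable {ι}

lemma mapRpowPreservesPosSemidef_of_subsingleton [Subsingleton ι] (α : ℝ) :
    MapRpowPreservesPosSemidef ι α := fun _ _ hA0 =>
  posSemidef_of_subsingleton fun i => Real.rpow_nonneg (hA0 i i) α

lemma mapRpowMonotone_of_subsingleton [Subsingleton ι] {α : ℝ} (hα : 0 ≤ α) :
    MapRpowMonotone ι α := fun B C _ hCB hB0 _ =>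
  posSemidef_of_subsingleton fun i => by
    have hle : B i i ≤ C i i := sub_nonneg.mp hCB.diag_nonneg
    simpa using Real.rpow_le_rpow (hB0 i i) hle hα

lemma mapRpowMonotone_of_preservesPosSemidef {α : ℝ} (hα : 1 ≤ α)
    (h : MapRpowPreservesPosSemidef ι (α - 1)) : MapRpowMonotone ι α := by
  intro B C hB hCB hB0 hC0
  have hC : C.IsHermitian := by simpa using hCB.isHermitian.add hB.isHermitian
  refine PosSemidef.of_dotProduct_mulVec_nonneg
    ((hC.map_rpow α).sub (hB.isHermitian.map_rpow α)) fun x => ?_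
  set D := C - B
  set f : ℝ → ℝ := fun t => ∑ i, ∑ j, x i * (B i j + t * D i j) ^ α * x j
  set f' : ℝ → ℝ := fun t => ∑ i, ∑ j, x i * (α * (B i j + t * D i j) ^ (α - 1) * D i j) * x j
  have hf : ∀ t, HasDerivAt f (f' t) t := fun t =>
    HasDerivAt.fun_sum fun i _ => HasDerivAt.fun_sum fun j _ =>
      ((hasDerivAt_rpow_add_mul hα _ _ t).const_mul _).mul_const _
  have hf' : ∀ t ∈ Set.Icc (0 : ℝ) 1, 0 ≤ f' t := by
    rintro t ⟨ht0, ht1⟩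
    have hM : (B + t • D).PosSemidef := hB.add (hCB.smul ht0)
    have hM0 : ∀ i j, 0 ≤ (B + t • D) i j := fun i j => by
      have : (B + t • D) i j = (1 - t) * B i j + t * C i j := by simp [D]; ring
      rw [this]
      have := hB0 i j; have := hC0 i j
      positivity
    have := ((h _ hM hM0).hadamard hCB).dotProduct_mulVec_nonneg x
    rw [star_trivial, dotProduct_mulVec_eq_sum_sum] at this
    have hf't : f' t = α * ∑ i, ∑ j, x i * (((B + t • D).map (· ^ (α - 1))) ⊙ D) i j * x j := by
      simp only [f', mul_sum]
      refine sum_congr rfl fun i _ => sum_congr rfl fun j _ => ?_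
      simp only [hadamard_apply, map_apply, Matrix.add_apply, Matrix.smul_apply, smul_eq_mul]
      ring
    rw [hf't]
    exact mul_nonneg (by linarith) this
  have hmono : MonotoneOn f (Set.Icc 0 1) :=
    monotoneOn_of_hasDerivWithinAt_nonneg (convex_Icc 0 1)
      (fun t _ => (hf t).continuousAt.continuousWithinAt)
      (fun t _ => (hf t).hasDerivWithinAt) fun t ht => hf' t (interior_subset ht)
  have h01 := hmono (by simp) (by simp) zero_le_one
  rw [star_trivial, dotProduct_mulVec_eq_sum_sum]
  simp only [f, D, zero_mul, add_zero, one_mul, Matrix.sub_apply, add_sub_cancel] at h01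
  simpa [mul_sub, sub_mul] using h01

lemma mapRpowPreservesPosSemidef_succ {n : ℕ} {α : ℝ} (h : MapRpowMonotone (Fin n) α) :
    MapRpowPreservesPosSemidef (Fin (n + 1)) α := by
  intro A hA hA0
  set i := Fin.last n
  set y := (A i i)⁻¹ • vecMulVec (A i) (A i)
  have hy : y.PosSemidef := posSemidef_smul_vecMulVec_self (inv_nonneg.2 (hA0 i i)) _
  have hy0 : ∀ j k, 0 ≤ y j k := fun j k => by
    have := hA0 i i; have := hA0 i j; have := hA0 i k
    simp only [y, Matrix.smul_apply, vecMulVec_apply, smul_eq_mul]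
    positivity
  have hyi : ∀ j, y j i = A j i := fun j => by
    by_cases ha : A i i = 0
    · simp [y, ha, hA.apply_eq_zero_of_diag_eq_zero ha j]
    · simp only [y, Matrix.smul_apply, vecMulVec_apply, smul_eq_mul]
      rw [hA.isHermitian.apply_comm j i]
      field_simp
  have hymap : (y.map (· ^ α)).PosSemidef := by
    have := posSemidef_smul_vecMulVec_self (Real.rpow_nonneg (inv_nonneg.2 (hA0 i i)) α)
      (fun j => A i j ^ α)
    convert this using 1
    ext j k
    simp only [y, map_apply, Matrix.smul_apply, vecMulVec_apply, smul_eq_mul]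
    rw [Real.mul_rpow (inv_nonneg.2 (hA0 i i)) (mul_nonneg (hA0 i j) (hA0 i k)),
      Real.mul_rpow (hA0 i j) (hA0 i k)]
  rw [← add_sub_cancel (y.map (· ^ α)) (A.map (· ^ α))]
  refine hymap.add (posSemidef_of_submatrix_castSucc
    ((hA.isHermitian.map_rpow α).sub (hy.isHermitian.map_rpow α)) (fun j => ?_) ?_)
  · simp only [Matrix.sub_apply, map_apply]
    rw [hyi, sub_self]
  · exact h _ _ (hy.submatrix _) ((hA.sub_inv_smul_vecMulVec i).submatrix _)
      (fun _ _ => hy0 _ _) (fun _ _ => hA0 _ _)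

theorem mapRpowPreservesPosSemidef_fin :
    ∀ (n : ℕ) {α : ℝ}, (n : ℝ) - 2 ≤ α → MapRpowPreservesPosSemidef (Fin n) α
  | 0, α, _ => mapRpowPreservesPosSemidef_of_subsingleton α
  | 1, α, _ => mapRpowPreservesPosSemidef_of_subsingleton α
  | 2, _, hα =>
    mapRpowPreservesPosSemidef_succ <| mapRpowMonotone_of_subsingleton (by simpa using hα)
  | n + 3, α, hα => mapRpowPreservesPosSemidef_succ <| by
      push_cast at hα
      exact mapRpowMonotone_of_preservesPosSemidef (by linarith [n.cast_nonneg (α := ℝ)])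
        (mapRpowPreservesPosSemidef_fin (n + 2) (by push_cast; linarith))

end EntrywisePower

lemma Ring.choose_eq_prod_div (a : ℝ) (n : ℕ) :
    Ring.choose a n = (∏ j ∈ range n, (a - j)) / n.factorial := by
  rw [Ring.choose_eq_smul, ← descPochhammer_eval_eq_prod_range, smul_eq_mul, inv_mul_eq_div,
    ← descPochhammer_map (Int.castRingHom ℝ), Polynomial.eval_map, ← Polynomial.aeval_eq_smeval,
    Polynomial.aeval_def, algebraMap_int_eq]

lemma Ring.choose_nat_floor_add_two_neg {α : ℝ} (hα0 : 0 ≤ α) (hα : α ≠ ⌊α⌋₊) :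
    Ring.choose α (⌊α⌋₊ + 2) < 0 := by
  rw [Ring.choose_eq_prod_div, prod_range_succ]
  refine div_neg_of_neg_of_pos (mul_neg_of_pos_of_neg (prod_pos fun j hj => ?_) ?_) (by positivity)
  · have hj : (j : ℝ) ≤ ⌊α⌋₊ := by exact_mod_cast Nat.lt_succ_iff.mp (mem_range.mp hj)
    have := (Nat.floor_le hα0).lt_of_ne (Ne.symm hα)
    linarith
  · have := Nat.lt_floor_add_one α
    push_cast
    linarith

lemma Real.one_add_rpow_sub_sum_isBigO (α : ℝ) (n : ℕ) :
    (fun x : ℝ => (1 + x) ^ α - ∑ m ∈ range n, Ring.choose α m * x ^ m) =O[𝓝 0] (· ^ n) := by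
  have := (Real.one_add_rpow_hasFPowerSeriesAt_zero (a := α)).isBigO_sub_partialSum_pow n
  simp only [zero_add, ← norm_pow, isBigO_norm_right] at this
  simpa [FormalMultilinearSeries.partialSum, binomialSeries, mul_comm] using this

lemma exists_sum_mul_pow_eq_ite {N : ℕ} {a : Fin N → ℝ} (ha : Function.Injective a) (k : Fin N) :
    ∃ z : Fin N → ℝ, ∀ m : Fin N, ∑ j, z j * a j ^ (m : ℕ) = if m = k then 1 else 0 := by
  have hU : IsUnit (vandermonde a)ᵀ := by
    rw [isUnit_iff_isUnit_det, det_transpose, isUnit_iff_ne_zero]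
    exact det_vandermonde_ne_zero_iff.mpr ha
  obtain ⟨z, hz⟩ := mulVec_surjective_iff_isUnit.mpr hU (Pi.single k 1)
  refine ⟨z, fun m => ?_⟩
  simpa [mulVec, dotProduct, vandermonde_apply, Pi.single_apply, mul_comm] using congrFun hz m

lemma sum_sum_one_add_mul_rpow_sub_isBigO {ι : Type*} [Fintype ι] (α : ℝ) {a z : ι → ℝ} {k : ℕ}
    (hz : ∀ m ≤ k, ∑ j, z j * a j ^ m = if m = k then 1 else 0) :
    (fun ε : ℝ => ∑ i, ∑ j, z i * (1 + ε * (a i * a j)) ^ α * z j - Ring.choose α k * ε ^ k)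
      =O[𝓝 0] (· ^ (k + 1)) := by
  set P : ℝ → ℝ := fun x => ∑ m ∈ range (k + 1), Ring.choose α m * x ^ m
  have hP : ∀ ε, ∑ i, ∑ j, z i * z j * P (ε * (a i * a j)) = Ring.choose α k * ε ^ k := by
    intro ε
    calc ∑ i, ∑ j, z i * z j * P (ε * (a i * a j))
        = ∑ m ∈ range (k + 1),
            Ring.choose α m * ε ^ m * ((∑ i, z i * a i ^ m) * ∑ j, z j * a j ^ m) := by
          simp only [P, mul_sum, sum_mul]
          conv_rhs => rw [sum_comm]
          refine sum_congr rfl fun i _ => ?_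
          conv_rhs => rw [sum_comm]
          refine sum_congr rfl fun j _ => sum_congr rfl fun m _ => ?_
          ring
      _ = Ring.choose α k * ε ^ k := by
          rw [sum_congr rfl fun m hm => by rw [hz m (Nat.lt_succ_iff.mp (mem_range.mp hm))]]
          simp
  have hR : ∀ i j, (fun ε : ℝ => z i * z j * ((1 + ε * (a i * a j)) ^ α - P (ε * (a i * a j))))
      =O[𝓝 0] (· ^ (k + 1)) := by
    intro i j
    have hc : Tendsto (fun ε : ℝ => ε * (a i * a j)) (𝓝 0) (𝓝 0) := by
      simpa using (tendsto_id (x := 𝓝 (0 : ℝ))).mul_const (a i * a j)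
    refine (((Real.one_add_rpow_sub_sum_isBigO α (k + 1)).comp_tendsto hc).trans ?_).const_mul_left
      _
    exact ((isBigO_refl (· ^ (k + 1)) _).const_mul_left ((a i * a j) ^ (k + 1))).congr_left
      fun ε => by simp only [Function.comp_apply]; ring
  refine (IsBigO.fun_sum (s := univ) fun i _ =>
    IsBigO.fun_sum (s := univ) fun j _ => hR i j).congr_left fun ε => ?_
  simp only [← hP ε, ← sum_sub_distrib]
  exact sum_congr rfl fun i _ => sum_congr rfl fun j _ => by ring

theorem exists_posSemidef_not_posSemidef_map_rpow {N : ℕ} {α : ℝ} (hα0 : 0 < α)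
    (hαN : α < N - 2) (hα : ∀ m : ℕ, α ≠ m) :
    ∃ A : Matrix (Fin N) (Fin N) ℝ, A.PosSemidef ∧ (∀ i j, 0 < A i j) ∧
      ¬ (A.map (· ^ α)).PosSemidef := by
  set k := ⌊α⌋₊ + 2
  have hkN : k < N := by
    have : (k : ℝ) < N := by
      have := Nat.floor_le hα0.le
      push_cast [k]
      linarith
    exact_mod_cast this
  have hc : Ring.choose α k < 0 := Ring.choose_nat_floor_add_two_neg hα0.le (hα _)
  set a : Fin N → ℝ := fun j => (j : ℕ) + 1
  have ha : Function.Injective a := fun i j h => Fin.ext (by simpa [a] using h)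
  obtain ⟨z, hz⟩ := exists_sum_mul_pow_eq_ite ha ⟨k, hkN⟩
  have hz' : ∀ m ≤ k, ∑ j, z j * a j ^ m = if m = k then 1 else 0 := fun m hm => by
    simpa [Fin.ext_iff] using hz ⟨m, by omega⟩
  have hsmall := (sum_sum_one_add_mul_rpow_sub_isBigO α hz').trans_isLittleO
    (isLittleO_pow_pow k.lt_succ_self)
  obtain ⟨ε, hε, hεpos⟩ := (((hsmall.def (by linarith : 0 < -Ring.choose α k / 2)).filter_mono
    nhdsWithin_le_nhds).and (self_mem_nhdsWithin (s := Set.Ioi (0 : ℝ)))).exists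
  refine ⟨of fun i j => 1 + ε * (a i * a j), ?_, fun i j => ?_, fun h => ?_⟩
  · have : of (fun i j => 1 + ε * (a i * a j)) = vecMulVec 1 1 + ε • vecMulVec a a := by
      ext i j; simp [vecMulVec_apply]
    rw [this]
    simpa using (posSemidef_vecMulVec_self_star 1).add
      ((posSemidef_vecMulVec_self_star a).smul hεpos.le)
  · simp only [of_apply, a]
    positivity
  · have hQ := h.dotProduct_mulVec_nonneg z
    rw [star_trivial, dotProduct_mulVec_eq_sum_sum] at hQ
    simp only [map_apply, of_apply] at hQ
    have hεk : 0 < ε ^ k := pow_pos hεpos k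
    rw [Real.norm_eq_abs, Real.norm_eq_abs, abs_of_pos hεk] at hε
    nlinarith [(abs_le.mp hε).2]

theorem stmt12_general (N : ℕ) :
    (∀ α : ℝ, (N : ℝ) - 2 ≤ α →
      ∀ A : Matrix (Fin N) (Fin N) ℝ, A.PosSemidef → (∀ j k, 0 ≤ A j k) →
        (Matrix.of fun j k : Fin N => A j k ^ α).PosSemidef) ∧
    (∀ α : ℝ, 0 < α → α < (N : ℝ) - 2 → (∀ m : ℤ, α ≠ (m : ℝ)) →
      ∃ A : Matrix (Fin N) (Fin N) ℝ, A.PosSemidef ∧ (∀ j k, 0 < A j k) ∧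
        ¬ (Matrix.of fun j k : Fin N => A j k ^ α).PosSemidef) :=
  ⟨fun _ hα => mapRpowPreservesPosSemidef_fin N hα,
    fun _ hα0 hαN hα => exists_posSemidef_not_posSemidef_map_rpow hα0 hαN
      fun m => by exact_mod_cast hα m⟩

/-- FitzGerald–Horn: for `N ≥ 2`, every real power `α ≥ N − 2` preserves
positive semidefiniteness entrywise on `N × N` matrices with non-negative
entries (with `0^0 := 1`, as for `Real.rpow`), while no non-integer power
`0 < α < N − 2` does so on matrices with positive entries. -/
theorem stmt12 (N : ℕ) (hN : 2 ≤ N) :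
    (∀ α : ℝ, (N : ℝ) - 2 ≤ α →
      ∀ A : Matrix (Fin N) (Fin N) ℝ, A.PosSemidef → (∀ j k, 0 ≤ A j k) →
        (Matrix.of fun j k : Fin N => A j k ^ α).PosSemidef) ∧
    (∀ α : ℝ, 0 < α → α < (N : ℝ) - 2 → (∀ m : ℤ, α ≠ (m : ℝ)) →
      ∃ A : Matrix (Fin N) (Fin N) ℝ, A.PosSemidef ∧ (∀ j k, 0 < A j k) ∧
        ¬ (Matrix.of fun j k : Fin N => A j k ^ α).PosSemidef) :=
  stmt12_general N
end

section
/- (Khare) Let R be a commutative unital ring, let t be an indeterminate, and let f(t) = Σ_{M ≥ 0} f_M t^M ∈ R[[t]] be a formal power series. For any N ≥ 1 and vectors u, v ∈ R^N, the following identity holds in R[[t]]: det f[t · u vᵀ] = Σ_{M ≥ C(N,2)} t^M Σ_{m} det(u^{∘m}) · det(v^{∘m}) · ∏_{k=0}^{N−1} f_{m_k}, where the inner sum runs over all tuples m = (m₀ < m₁ < ⋯ < m_{N−1}) of distinct non-negative integers summing to M, and u^{∘m} denotes the N × N matrix with (j,k) entry u_j^{m_{k−1}}. Here f[t · u vᵀ]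 is the N × N matrix over R[[t]] with (j,k) entry f(t u_j v_k) = Σ_{M ≥ 0} f_M u_j^M v_k^M t^M, and C(N,2) is the binomial coefficient N choose 2. -/
/-!
The coefficient of `t^M` in the determinant is multilinear in the columns, so it is a sum over
degree vectors `l` with `∑ l = M` of `(∏ₖ f_{l k} v_k^{l k}) · det u^{∘l}`. That determinant
vanishes unless `l` is injective, and an injective `l` is uniquely `m ∘ σ` with `m` strictly
increasing and `σ` a permutation. Then `det u^{∘(m ∘ σ)} = sgn σ · det u^{∘m}`, and summing
`sgn σ · ∏ₖ v_k^{m (σ k)}` over `σ` gives `det v^{∘m}`.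
-/

open Finset Matrix

theorem PowerSeries.coeff_prod_eq_sum_piAntidiag {R ι : Type*} [CommSemiring R] [DecidableEq ι]
    (f : ι → PowerSeries R) (d : ℕ) (s : Finset ι) :
    coeff d (∏ j ∈ s, f j) = ∑ l ∈ piAntidiag s d, ∏ i ∈ s, coeff (l i) (f i) := by
  rw [coeff_prod, finsuppAntidiag, sum_map]
  exact sum_attach (piAntidiag s d) fun l => ∏ i ∈ s, coeff (l i) (f i)

theorem PowerSeries.coeff_det {R n : Type*} [CommRing R] [Fintype n] [DecidableEq n]
    (A : Matrix n n (PowerSeries R)) (d : ℕ) :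
    coeff d A.det = ∑ l ∈ piAntidiag univ d, det (of fun i j => coeff (l j) (A i j)) := by
  simp only [det_apply, map_sum, Units.smul_def, map_zsmul, coeff_prod_eq_sum_piAntidiag,
    smul_sum, of_apply]
  exact sum_comm

section ColumnPowers

variable {R n α : Type*} [CommRing R] [Fintype n] [DecidableEq n] (w : n → α → R)

theorem Matrix.det_of_comp_eq_zero_of_not_injective {e : n → α}
    (he : ¬ Function.Injective e) : det (of fun j k => w j (e k)) = 0 := by
  obtain ⟨a, b, hab, hne⟩ := Function.not_injective_iff.mp he
  exact det_zero_of_column_eq hne fun j => by simp [hab]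

theorem Matrix.det_of_comp_perm (e : n → α) (σ : Equiv.Perm n) :
    det (of fun j k => w j (e (σ k))) = Equiv.Perm.sign σ * det (of fun j k => w j (e k)) :=
  det_permute' σ (of fun j k => w j (e k))

theorem Matrix.det_of_eq_sum_perm (e : n → α) :
    det (of fun j k => w j (e k)) =
      ∑ σ : Equiv.Perm n, Equiv.Perm.sign σ * ∏ k, w k (e (σ k)) := by
  rw [← det_transpose, det_apply']
  rfl

end ColumnPowers

theorem Tuple.sort_comp_perm_of_strictMono {α : Type*} [LinearOrder α] {N : ℕ}
    {g : Fin N → α} (hg : StrictMono g) (σ : Equiv.Perm (Fin N)) :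
    Tuple.sort (g ∘ σ) = σ⁻¹ := by
  refine (Tuple.eq_sort_iff.2 ⟨?_, fun i j hij h => ?_⟩).symm
  · simpa [Function.comp_def] using hg.monotone
  · simp only [Equiv.Perm.coe_inv, Function.comp_apply, Equiv.apply_symm_apply,
      hg.injective.eq_iff] at h
    exact absurd h hij.ne

theorem Finset.le_of_mem_piAntidiag {ι : Type*} [DecidableEq ι] {s : Finset ι} {n : ℕ}
    {l : ι → ℕ} (hl : l ∈ piAntidiag s n) {i : ι} (hi : i ∈ s) : l i ≤ n := by
  rw [← (mem_piAntidiag.1 hl).1]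
  exact single_le_sum (fun _ _ => Nat.zero_le _) hi

theorem Finset.sum_piAntidiag_injective_eq_sum_strictMono_perm {β : Type*} [AddCommMonoid β]
    (N M : ℕ) (φ : (Fin N → ℕ) → β) :
    ∑ l ∈ (piAntidiag univ M).filter Function.Injective, φ l =
      ∑ g ∈ univ.filter (fun g : Fin N → Fin (M + 1) => StrictMono g ∧ ∑ k, (g k : ℕ) = M),
        ∑ σ : Equiv.Perm (Fin N), φ (fun k => g (σ k)) := by
  rw [← sum_product']
  symm
  refine sum_bij' (fun p _ k => (p.1 (p.2 k) : ℕ))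
    (fun l hl => (fun k => ⟨l (Tuple.sort l k),
      Nat.lt_succ_of_le (le_of_mem_piAntidiag (mem_filter.1 hl).1 (mem_univ _))⟩,
      (Tuple.sort l)⁻¹)) ?_ ?_ ?_ ?_ (fun _ _ => rfl)
  · rintro ⟨g, σ⟩ hp
    obtain ⟨hg, hsum⟩ := (mem_filter.1 (mem_product.1 hp).1).2
    refine mem_filter.2 ⟨mem_piAntidiag.2 ⟨?_, fun _ _ => mem_univ _⟩, ?_⟩
    · exact (Equiv.sum_comp σ fun k => (g k : ℕ)).trans hsum
    · exact fun a b h => σ.injective (hg.injective (Fin.val_injective h))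
  · intro l hl
    obtain ⟨hl, hinj⟩ := mem_filter.1 hl
    refine mem_product.2 ⟨mem_filter.2 ⟨mem_univ _, ?_, ?_⟩, mem_univ _⟩
    · exact fun a b hab => Fin.mk_lt_mk.2 <| (Tuple.monotone_sort l).strictMono_of_injective
        (hinj.comp (Tuple.sort l).injective) hab
    · exact (Equiv.sum_comp (Tuple.sort l) l).trans (mem_piAntidiag.1 hl).1
  · rintro ⟨g, σ⟩ hp
    have hsort : Tuple.sort (fun k => (g (σ k) : ℕ)) = σ⁻¹ :=
      Tuple.sort_comp_perm_of_strictMono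
        (Fin.val_strictMono.comp (mem_filter.1 (mem_product.1 hp).1).2.1) σ
    ext k <;> simp [hsort]
  · intro l _
    ext k
    simp

open scoped Classical in
theorem stmt16_general (R : Type*) [CommRing R] (N : ℕ)
    (f : PowerSeries R) (u v : Fin N → R) (M : ℕ) :
    PowerSeries.coeff (R := R) M
      (Matrix.det (Matrix.of fun j k : Fin N =>
        PowerSeries.mk fun m : ℕ =>
          PowerSeries.coeff (R := R) m f * u j ^ m * v k ^ m)) =
    ∑ g ∈ Finset.univ.filter
        (fun g : Fin N → Fin (M + 1) =>
          StrictMono g ∧ ∑ k, (g k : ℕ) = M),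
      (Matrix.of fun j k : Fin N => u j ^ (g k : ℕ)).det *
        (Matrix.of fun j k : Fin N => v j ^ (g k : ℕ)).det *
        ∏ k : Fin N, PowerSeries.coeff (R := R) (g k : ℕ) f := by
  set F : ℕ → R := fun m => PowerSeries.coeff m f
  have hcolumns (l : Fin N → ℕ) :
      det (of fun j k => F (l k) * u j ^ l k * v k ^ l k) =
        (∏ k, F (l k) * v k ^ l k) * det (of fun j k => u j ^ l k) := by
    rw [← det_mul_row]
    congr 1
    ext j k
    simp only [of_apply]
    ring
  calc _ = ∑ l ∈ piAntidiag univ M,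
          (∏ k, F (l k) * v k ^ l k) * det (of fun j k => u j ^ l k) := by
        simp only [PowerSeries.coeff_det, of_apply, PowerSeries.coeff_mk, hcolumns, F]
    _ = ∑ l ∈ (piAntidiag univ M).filter Function.Injective,
          (∏ k, F (l k) * v k ^ l k) * det (of fun j k => u j ^ l k) := by
        refine (sum_filter_of_ne fun l _ hl => by_contra fun hinj => hl ?_).symm
        rw [det_of_comp_eq_zero_of_not_injective (fun j m => u j ^ m) hinj, mul_zero]
    _ = _ := by
        rw [sum_piAntidiag_injective_eq_sum_strictMono_perm]
        refine sum_congr rfl fun g _ => ?_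
        rw [det_of_eq_sum_perm (fun j m => v j ^ m) (fun k => (g k : ℕ)), mul_sum, sum_mul]
        refine sum_congr rfl fun σ _ => ?_
        rw [det_of_comp_perm (fun j m => u j ^ m) (fun k => (g k : ℕ)) σ, prod_mul_distrib,
          Equiv.prod_comp σ fun k => F (g k)]
        ring

open scoped Classical in
/-- Khare's symmetric function identity: over any commutative unital ring `R`,
for a formal power series `f = Σ_M f_M t^M` and vectors `u, v ∈ R^N`, the
coefficient of `t^M` in `det f[t · u vᵀ]` equals
`Σ_m det(u^{∘m}) det(v^{∘m}) ∏_k f_{m_k}`, summed over all strictly increasing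
tuples `m = (m₀ < ⋯ < m_{N−1})` of non-negative integers with `Σ m_k = M`
(in particular the coefficient vanishes for `M < C(N,2)`). -/
theorem stmt16 (R : Type*) [CommRing R] (N : ℕ) (hN : 1 ≤ N)
    (f : PowerSeries R) (u v : Fin N → R) (M : ℕ) :
    PowerSeries.coeff (R := R) M
      (Matrix.det (Matrix.of fun j k : Fin N =>
        PowerSeries.mk fun m : ℕ =>
          PowerSeries.coeff (R := R) m f * u j ^ m * v k ^ m)) =
    ∑ g ∈ Finset.univ.filter
        (fun g : Fin N → Fin (M + 1) =>
          StrictMono g ∧ ∑ k, (g k : ℕ) = M),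
      (Matrix.of fun j k : Fin N => u j ^ (g k : ℕ)).det *
        (Matrix.of fun j k : Fin N => v j ^ (g k : ℕ)).det *
        ∏ k : Fin N, PowerSeries.coeff (R := R) (g k : ℕ) f :=
  stmt16_general R N f u v M
end

section
/- (Pólya) The Gaussian kernel K(x, y) := exp(−(x − y)²) on ℝ × ℝ is totally positive: for every n ≥ 1 and all real numbers x₁ < x₂ < ⋯ < xₙ and y₁ < y₂ < ⋯ < yₙ, the determinant of the n × n matrix [exp(−(x_j − y_k)²)]_{j,k=1}^n is strictly positive. -/
/-!
Writing `exp (-(x - y) ^ 2) = exp (-x ^ 2) * exp (-y ^ 2) * exp (2 * x * y)` and pulling the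
positive row and column factors out of the determinant reduces the claim to the kernel
`exp (x * y)`. An exponential sum `∑ c j * exp (a j * t)` with `n` distinct exponents has at
most `n - 1` real zeros unless it vanishes identically (divide by the first exponential and
apply Rolle), so `det [exp (x j * y k)]` never vanishes on strictly increasing tuples. Moving
`x` linearly to `(0, 1, …, n - 1)` keeps it strictly increasing, and there the matrix is the
transposed Vandermonde matrix of the increasing numbers `exp (y k)`, whose determinant is
positive; by the intermediate value theorem the sign cannot change along the way.
-/

open Real Matrix Finset Set

theorem exists_strictMono_deriv_eq_zero {n : ℕ} {f : ℝ → ℝ} (hf : Differentiable ℝ f)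
    {t : Fin (n + 1) → ℝ} (ht : StrictMono t) (hft : ∀ k, f (t k) = 0) :
    ∃ s : Fin n → ℝ, StrictMono s ∧ ∀ k, deriv f (s k) = 0 := by
  have hRolle : ∀ k : Fin n, ∃ s ∈ Ioo (t k.castSucc) (t k.succ), deriv f s = 0 := fun k =>
    exists_deriv_eq_zero (ht Fin.castSucc_lt_succ) hf.continuous.continuousOn
      (by rw [hft, hft])
  choose s hs hs0 using hRolle
  refine ⟨s, fun k k' hkk' => ?_, hs0⟩
  calc s k < t k.succ := (hs k).2
    _ ≤ t k'.castSucc := ht.monotone (Fin.succ_le_castSucc_iff.mpr hkk')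
    _ < s k' := (hs k').1

theorem eq_zero_of_forall_sum_mul_exp_eq_zero {n : ℕ} {a t c : Fin n → ℝ} (ha : StrictMono a)
    (ht : StrictMono t) (h : ∀ k, ∑ j, c j * exp (a j * t k) = 0) : c = 0 := by
  induction n with
  | zero => exact Subsingleton.elim _ _
  | succ n ih =>
    -- The `j = 0` term of `F` is constant, so `F'` is an exponential sum with `n` terms.
    set F : ℝ → ℝ := fun s => ∑ j, c j * exp ((a j - a 0) * s) with hF
    have hF_eq : ∀ s, F s = exp (-(a 0 * s)) * ∑ j, c j * exp (a j * s) := fun s => by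
      simp only [hF, mul_sum, ← mul_assoc, mul_comm _ (c _), mul_assoc (c _), ← exp_add]
      congr! 3; ring
    have hF_deriv : ∀ s, HasDerivAt F
        (∑ j : Fin n, c j.succ * (a j.succ - a 0) * exp ((a j.succ - a 0) * s)) s := fun s => by
      refine (HasDerivAt.fun_sum (u := univ) fun j _ =>
        (((hasDerivAt_id s).const_mul (a j - a 0)).exp).const_mul (c j)).congr_deriv ?_
      simp only [Fin.sum_univ_succ, sub_self, id, zero_mul, mul_zero, zero_add]
      exact sum_congr rfl fun j _ => by ring
    obtain ⟨s, hs, hFs⟩ := exists_strictMono_deriv_eq_zero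
      (fun s => (hF_deriv s).differentiableAt) ht fun k => by rw [hF_eq, h k, mul_zero]
    have htail : (fun j : Fin n => c j.succ * (a j.succ - a 0)) = 0 :=
      ih (fun i j hij => sub_lt_sub_right (ha (Fin.succ_lt_succ_iff.mpr hij)) _) hs
        fun k => by rw [← hFs k, (hF_deriv (s k)).deriv]
    have hc_succ : ∀ j : Fin n, c j.succ = 0 := fun j =>
      (mul_eq_zero.mp (congrFun htail j)).resolve_right (sub_pos.mpr (ha (Fin.succ_pos j))).ne'
    have hc_zero : c 0 = 0 := by
      simpa [Fin.sum_univ_succ, hc_succ] using h 0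
    ext j
    cases j using Fin.cases with
    | zero => exact hc_zero
    | succ j => exact hc_succ j

theorem det_exp_mul_ne_zero {n : ℕ} {x y : Fin n → ℝ} (hx : StrictMono x)
    (hy : StrictMono y) :
    (of fun j k => exp (x j * y k)).det ≠ 0 := by
  intro h
  obtain ⟨v, hv, hAv⟩ := exists_mulVec_eq_zero_iff.mpr h
  refine hv (eq_zero_of_forall_sum_mul_exp_eq_zero hy hx fun j => ?_)
  simpa [mulVec, dotProduct, mul_comm] using congrFun hAv j

theorem det_exp_natCast_mul_pos {n : ℕ} {y : Fin n → ℝ} (hy : StrictMono y) :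
    0 < (of fun j k : Fin n => exp ((j : ℝ) * y k)).det := by
  have hvandermonde :
      (of fun j k : Fin n => exp ((j : ℝ) * y k)) = (vandermonde (exp ∘ y))ᵀ := by
    ext j k
    simp [vandermonde, ← exp_nat_mul]
  rw [hvandermonde, det_transpose, det_vandermonde]
  exact prod_pos fun i _ => prod_pos fun j hj => sub_pos.mpr (exp_lt_exp.mpr (hy (mem_Ioi.mp hj)))

theorem strictMono_one_sub_mul_add_mul {ι : Type*} [Preorder ι] {f g : ι → ℝ}
    (hf : StrictMono f) (hg : StrictMono g) {s : ℝ} (hs : s ∈ Icc (0 : ℝ) 1) :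
    StrictMono fun i => (1 - s) * f i + s * g i := fun i j hij => by
  have hf' := sub_pos.mpr (hf hij)
  have hg' := sub_pos.mpr (hg hij)
  nlinarith [hs.1, hs.2, mul_nonneg hs.1 hg'.le, mul_nonneg (sub_nonneg.mpr hs.2) hf'.le]

theorem det_exp_mul_pos {n : ℕ} {x y : Fin n → ℝ} (hx : StrictMono x) (hy : StrictMono y) :
    0 < (of fun j k => exp (x j * y k)).det := by
  set D : ℝ → ℝ := fun s => (of fun j k : Fin n => exp (((1 - s) * j + s * x j) * y k)).det
    with hD
  have hD_cont : Continuous D := by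
    refine Continuous.matrix_det (continuous_matrix fun j k => ?_)
    fun_prop
  have hD_ne : ∀ s ∈ Icc (0 : ℝ) 1, D s ≠ 0 := fun s hs =>
    det_exp_mul_ne_zero (strictMono_one_sub_mul_add_mul
      (Nat.strictMono_cast.comp Fin.val_strictMono) hx hs) hy
  have hD_zero : 0 < D 0 := by simpa [hD] using det_exp_natCast_mul_pos hy
  have hD_one : D 1 = (of fun j k => exp (x j * y k)).det := by simp [hD]
  rw [← hD_one]
  by_contra! hle
  obtain ⟨s, hs, hDs⟩ :=
    intermediate_value_Icc' zero_le_one hD_cont.continuousOn ⟨hle, hD_zero.le⟩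
  exact hD_ne s hs hDs

theorem stmt17_general (n : ℕ) (x y : Fin n → ℝ)
    (hx : StrictMono x) (hy : StrictMono y) :
    0 < (Matrix.of fun j k : Fin n =>
      Real.exp (-(x j - y k) ^ 2)).det := by
  have hfactor : (of fun j k : Fin n => exp (-(x j - y k) ^ 2)) =
      of fun j k => exp (-y k ^ 2) *
        of (fun j k => exp (-x j ^ 2) * of (fun j k => exp (2 * x j * y k)) j k) j k := by
    ext j k
    simp only [of_apply, ← exp_add]
    ring_nf
  rw [hfactor, det_mul_row, det_mul_column]
  have := det_exp_mul_pos (hx.const_mul two_pos) hy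
  positivity

/-- Pólya: the Gaussian kernel `K(x,y) = exp(−(x−y)²)` is totally positive: for
any `n ≥ 1` and strictly increasing tuples `x₁ < ⋯ < xₙ`, `y₁ < ⋯ < yₙ`, the
matrix `[exp(−(x_j − y_k)²)]` has strictly positive determinant. -/
theorem stmt17 (n : ℕ) (hn : 1 ≤ n) (x y : Fin n → ℝ)
    (hx : StrictMono x) (hy : StrictMono y) :
    0 < (Matrix.of fun j k : Fin n =>
      Real.exp (-(x j - y k) ^ 2)).det :=
  stmt17_general n x y hx hy
end

section
/- (Guillot–Rajaratnam) Let G be a simple graph on the vertex set {1, …, N}. For an N × N matrix A = [a_{jk}], let A_G denote the matrix with (A_G)_{jk} = a_{jk} if j = k or {j,k} is an edge of G, and (A_G)_{jk} = 0 otherwise. Then A_G is positive definite for every real symmetric positive definite N × N matrix A if and only if every connected component of G is a complete graph (i.e., G is a disjoint union of complete graphs). -/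
/-!
If every component of `G` is complete, `A_G` keeps exactly the diagonal blocks of `A` indexed by
the components, so its quadratic form at `x` is the sum of the quadratic forms of `A` at the
restrictions of `x` to the components, and one of these is positive.

Otherwise a shortest path between two non-adjacent vertices of one component starts with an
induced path `a - b - c`. The matrix with `1` on the diagonal and `4/5` elsewhere is positive
definite, but after masking its quadratic form at `e_a - e_b + e_c` is `3 - 4 · 4/5 < 0`.
-/

open Matrix

namespace SimpleGraph

variable {V : Type*} {G : SimpleGraph V}

theorem Reachable.exists_adj_adj_not_adj_ne {u v : V} (h : G.Reachable u v) (hne : u ≠ v)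
    (hna : ¬G.Adj u v) : ∃ x a b, G.Adj x a ∧ G.Adj a b ∧ ¬G.Adj x b ∧ x ≠ b := by
  obtain ⟨p, hp⟩ := h.exists_walk_length_eq_dist
  have h0 : G.dist u v ≠ 0 := mt h.dist_eq_zero_iff.mp hne
  have h1 : G.dist u v ≠ 1 := mt dist_eq_one_iff_adj.mp hna
  exact p.exists_adj_adj_not_adj_ne hp (by omega)

end SimpleGraph

namespace Matrix

variable {V R : Type*} [Fintype V]

theorem posDef_ite_eq_one [DecidableEq V] {t : ℝ} (h0 : 0 ≤ t) (h1 : t < 1) :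
    (of fun j k : V => if j = k then 1 else t).PosDef := by
  have hsplit : (of fun j k : V => if j = k then 1 else t) = (1 - t) • 1 + t • vecMulVec 1 1 := by
    ext j k
    by_cases hjk : j = k <;> simp [hjk]
  rw [hsplit]
  exact (PosDef.one.smul (sub_pos.mpr h1)).add_posSemidef
    ((posSemidef_vecMulVec_self_star 1).smul h0)

/-- The left-hand side is the quadratic form of `M` at `e a - e b + e c`. -/
theorem PosDef.alternating_sum_pos [CommRing R] [PartialOrder R] [StarRing R] [TrivialStar R]
    [Nontrivial R] {M : Matrix V V R} (hM : M.PosDef) (a b c : V) :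
    0 < M a a + M b b + M c c - M a b - M b a - M b c - M c b + M a c + M c a := by
  classical
  set y : V → R := Pi.single a 1 - Pi.single b 1 + Pi.single c 1
  have hy : y ≠ 0 := fun h => by
    simpa [y, Finset.sum_add_distrib, Finset.sum_sub_distrib] using congrArg (∑ i, · i) h
  have hq := hM.dotProduct_mulVec_pos hy
  simp only [star_trivial, mulVec_add, mulVec_sub, mulVec_single, MulOpposite.op_one, one_smul,
    dotProduct_add, dotProduct_sub, add_dotProduct, sub_dotProduct, single_dotProduct, col_apply,
    one_mul, y] at hq
  convert hq using 1
  ring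

theorem PosDef.ite_comp_eq {ι : Type*} [DecidableEq ι] [CommRing R] [PartialOrder R] [StarRing R]
    [IsOrderedCancelAddMonoid R] {A : Matrix V V R} (hA : A.PosDef) (f : V → ι) :
    (of fun j k => if f j = f k then A j k else 0).PosDef := by
  classical
  set B : Matrix V V R := of fun j k => if f j = f k then A j k else 0
  refine PosDef.of_dotProduct_mulVec_pos ?_ fun x hx => ?_
  · ext j k
    simp [B, eq_comm, ← hA.isHermitian.apply j k, apply_ite star]
  let z : ι → V → R := fun c i => if f i = c then x i else 0
  have hsum : star x ⬝ᵥ B *ᵥ x = ∑ c ∈ Finset.univ.image f, star (z c) ⬝ᵥ A *ᵥ z c := by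
    simp only [dotProduct, mulVec, Finset.mul_sum]
    symm
    rw [Finset.sum_comm]
    refine Finset.sum_congr rfl fun j _ => ?_
    rw [Finset.sum_comm]
    refine Finset.sum_congr rfl fun k _ => ?_
    by_cases hjk : f j = f k <;> simp [z, B, hjk, apply_ite star, ite_mul, mul_ite]
  obtain ⟨i, hi⟩ := Function.ne_iff.mp hx
  rw [hsum]
  refine Finset.sum_pos' (fun c _ => hA.posSemidef.dotProduct_mulVec_nonneg (z c))
    ⟨f i, Finset.mem_image_of_mem f (Finset.mem_univ i), hA.dotProduct_mulVec_pos ?_⟩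
  exact Function.ne_iff.mpr ⟨i, by simpa [z] using hi⟩

end Matrix

namespace SimpleGraph

variable {V R : Type*} (G : SimpleGraph V) [DecidableEq V] [DecidableRel G.Adj]

/-- The matrix `A_G` of the paper. -/
def mask [Zero R] (A : Matrix V V R) : Matrix V V R :=
  of fun j k => if j = k ∨ G.Adj j k then A j k else 0

variable {G}

theorem mask_eq_ite_connectedComponentMk_eq [Zero R] [DecidableEq G.ConnectedComponent]
    (hG : ∀ j k, G.Reachable j k → j ≠ k → G.Adj j k) (A : Matrix V V R) :
    G.mask A = of fun j k =>
      if G.connectedComponentMk j = G.connectedComponentMk k then A j k else 0 := by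
  ext j k
  refine if_congr ⟨?_, fun h => ?_⟩ rfl rfl
  · rintro (rfl | hjk)
    exacts [rfl, ConnectedComponent.eq.mpr hjk.reachable]
  · by_cases hjk : j = k
    exacts [.inl hjk, .inr (hG j k (ConnectedComponent.eq.mp h) hjk)]

theorem not_posDef_mask_of_adj_adj_not_adj [Fintype V] {a b c : V} (hab : G.Adj a b)
    (hbc : G.Adj b c) (hac : ¬G.Adj a c) (hne : a ≠ c) :
    ¬(G.mask (of fun j k : V => if j = k then (1 : ℝ) else 4 / 5)).PosDef := by
  intro h
  have hca : ¬G.Adj c a := fun h => hac h.symm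
  have hq := h.alternating_sum_pos a b c
  norm_num [mask, hab, hab.symm, hab.ne, hab.ne.symm, hbc, hbc.symm, hbc.ne, hbc.ne.symm,
    hac, hca, hne, hne.symm] at hq

end SimpleGraph

open scoped Classical in
/-- Guillot–Rajaratnam: thresholding with respect to a graph `G` preserves
positive definiteness for all positive definite matrices iff every connected
component of `G` is complete (any two distinct vertices in the same component
are adjacent). -/
theorem stmt19 (N : ℕ) (G : SimpleGraph (Fin N)) :
    (∀ A : Matrix (Fin N) (Fin N) ℝ, A.PosDef →
      (Matrix.of fun j k : Fin N =>
        if j = k ∨ G.Adj j k then A j k else 0).PosDef) ↔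
    (∀ j k : Fin N, G.Reachable j k → j ≠ k → G.Adj j k) := by
  refine ⟨fun h j k hjk hne => ?_, fun hG A hA => ?_⟩
  · by_contra hna
    obtain ⟨a, b, c, hab, hbc, hac, hac_ne⟩ := hjk.exists_adj_adj_not_adj_ne hne hna
    exact SimpleGraph.not_posDef_mask_of_adj_adj_not_adj hab hbc hac hac_ne
      (h _ (posDef_ite_eq_one (by norm_num) (by norm_num)))
  · change (G.mask A).PosDef
    rw [SimpleGraph.mask_eq_ite_connectedComponentMk_eq hG]
    exact hA.ite_comp_eq _
end
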